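/- arXiv:2009.14546 — 9 statements merged into one kernel-verified Lean document; each statement's English description precedes it below -/
import Mathlib

section
/- For every a ∈ ℝ, the infimum of s(p∣1) + s(q∣1) over all p,q ≥ 0 with p − q = a equals 𝒞(a) := ∫₀ᵃ arcsinh(t/2) dt, and the infimum is attained at p = a/2 + √(1 + a²/4) and q = −a/2 + √(1 + a²/4). -/
/-! Writing `a = 2 sinh u`, the Fenchel–Young inequality `x u ≤ s(x∣1) + (eᵘ − 1)` for the
conjugate pair `s(·∣1)`, `exp − 1`, applied to `p` at `u` and to `q` at `−u`, gives
`s(p∣1) + s(q∣1) ≥ u (p − q) − 2 cosh u + 2 = 2u sinh u − 2 cosh u + 2`, with equality at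
`p = eᵘ`, `q = e⁻ᵘ`; these are the stated minimizers. The antiderivative
`t arsinh(t/2) − 2 cosh (arsinh (t/2))` of `arsinh(t/2)` shows that the same quantity is `𝒞(a)`. -/

noncomputable def sOne (p : ℝ) : ℝ := p * Real.log p - p + 1

noncomputable def Ccost (a : ℝ) : ℝ := ∫ t in (0:ℝ)..a, Real.arsinh (t / 2)

open Real

lemma mul_le_sOne_add_exp_sub_one {x : ℝ} (hx : 0 ≤ x) (u : ℝ) :
    x * u ≤ sOne x + (exp u - 1) := by
  rcases hx.eq_or_lt with rfl | hx
  · simp only [sOne, zero_mul, log_zero, sub_zero, zero_add]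
    linarith [exp_pos u]
  · have h := add_one_le_exp (u - log x)
    rw [exp_sub, exp_log hx, le_div_iff₀ hx] at h
    unfold sOne
    linear_combination h

lemma hasDerivAt_mul_arsinh_sub_cosh_arsinh (t : ℝ) :
    HasDerivAt (fun t => t * arsinh (t / 2) - 2 * cosh (arsinh (t / 2))) (arsinh (t / 2)) t := by
  have harsinh := ((hasDerivAt_id' t).div_const 2).arsinh
  refine (((hasDerivAt_id' t).mul harsinh).sub (harsinh.cosh.const_mul 2)).congr_deriv ?_
  rw [sinh_arsinh, smul_eq_mul]
  ring

lemma Ccost_eq (a : ℝ) : Ccost a = a * arsinh (a / 2) - 2 * cosh (arsinh (a / 2)) + 2 := by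
  rw [Ccost, intervalIntegral.integral_eq_sub_of_hasDerivAt
    (fun t _ => hasDerivAt_mul_arsinh_sub_cosh_arsinh t)
    ((continuous_arsinh.comp (continuous_id.div_const 2)).intervalIntegrable 0 a)]
  simp only [zero_div, arsinh_zero, cosh_zero]
  ring

lemma Ccost_two_mul_sinh (u : ℝ) : Ccost (2 * sinh u) = 2 * u * sinh u - 2 * cosh u + 2 := by
  rw [Ccost_eq, mul_div_cancel_left₀ _ two_ne_zero, arsinh_sinh]
  ring

lemma sOne_exp_add_sOne_exp_neg (u : ℝ) : sOne (exp u) + sOne (exp (-u)) = Ccost (2 * sinh u) := by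
  rw [Ccost_two_mul_sinh, sOne, sOne, log_exp, log_exp, sinh_eq, cosh_eq]
  ring

lemma Ccost_two_mul_sinh_le {x y : ℝ} (hx : 0 ≤ x) (hy : 0 ≤ y) {u : ℝ} (h : x - y = 2 * sinh u) :
    Ccost (2 * sinh u) ≤ sOne x + sOne y := by
  have hxu := mul_le_sOne_add_exp_sub_one hx u
  have hyu := mul_le_sOne_add_exp_sub_one hy (-u)
  have hlin : x * u + y * -u = 2 * u * sinh u := by linear_combination u * h
  rw [Ccost_two_mul_sinh, cosh_eq]
  linarith

lemma sqrt_one_add_two_mul_sinh_sq_div_four (u : ℝ) : √(1 + (2 * sinh u) ^ 2 / 4) = cosh u := by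
  rw [← sqrt_sq (cosh_pos u).le, cosh_sq]
  ring_nf

/-- For every `a ∈ ℝ`, the infimum of `s(p∣1) + s(q∣1)` over `p, q ≥ 0` with `p − q = a`
equals `𝒞(a)`, and it is attained at `p = a/2 + √(1 + a²/4)`, `q = −a/2 + √(1 + a²/4)`. -/
theorem inf_boltzmann_eq_Ccost (a : ℝ) :
    IsLeast {v : ℝ | ∃ p q : ℝ, 0 ≤ p ∧ 0 ≤ q ∧ p - q = a ∧ v = sOne p + sOne q}
      (Ccost a) ∧
    sOne (a / 2 + Real.sqrt (1 + a ^ 2 / 4)) + sOne (-(a / 2) + Real.sqrt (1 + a ^ 2 / 4))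
      = Ccost a := by
  obtain ⟨u, hu⟩ := sinh_surjective (a / 2)
  obtain rfl : a = 2 * sinh u := by rw [hu]; ring
  have hp : 2 * sinh u / 2 + cosh u = exp u := by rw [← sinh_add_cosh]; ring
  have hq : -(2 * sinh u / 2) + cosh u = exp (-u) := by rw [← cosh_sub_sinh]; ring
  rw [sqrt_one_add_two_mul_sinh_sq_div_four, hp, hq, sOne_exp_add_sOne_exp_neg]
  refine ⟨⟨⟨exp u, exp (-u), (exp_pos _).le, (exp_pos _).le, ?_,
    (sOne_exp_add_sOne_exp_neg u).symm⟩, ?_⟩, rfl⟩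
  · rw [sinh_eq]; ring
  · rintro _ ⟨x, y, hx, hy, hxy, rfl⟩
    exact Ccost_two_mul_sinh_le hx hy hxy
end

section
/- For every a ≥ 0 and b > 0 one has s(a∣b) = b·s(a/b∣1) and consequently s(a∣b) ≥ b·𝒞((a − b)/b). -/
/-- The Boltzmann cost `s(a∣b) = a·log(a/b) − a + b` for `a ≥ 0`, `b > 0`
(with the convention `0·log 0 = 0`, automatic since `Real.log 0 = 0`). -/
noncomputable def sCost (a b : ℝ) : ℝ := a * Real.log (a / b) - a + b

/-! Both `x ↦ s(x∣1)` and `x ↦ 𝒞(x − 1)` vanish at `x = 1`, with derivatives `log x` and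
`arsinh((x − 1)/2)`. Since `sinh (log x) = (x − x⁻¹)/2`, the first derivative lies below the
second on `(0, 1)` and above it on `(1, ∞)`, so their difference is minimal at `1`. Rescaling
by `b` gives the bound for general `b`. -/

open Real Set

lemma isMinOn_of_hasDerivAt_nonpos_of_nonneg {f f' : ℝ → ℝ} {a c : ℝ} (hac : a ≤ c)
    (hf : ContinuousOn f (Ici a)) (hf' : ∀ x ∈ Ioi a, HasDerivAt f (f' x) x)
    (hf'_nonpos : ∀ x ∈ Ioo a c, f' x ≤ 0) (hf'_nonneg : ∀ x ∈ Ioi c, 0 ≤ f' x) :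
    IsMinOn f (Ici a) c := by
  intro x (hx : a ≤ x)
  rcases le_total x c with hxc | hcx
  · have hanti : AntitoneOn f (Icc a c) := by
      refine antitoneOn_of_hasDerivWithinAt_nonpos (f' := f') (convex_Icc a c)
        (hf.mono Icc_subset_Ici_self) (fun y hy => ?_) (fun y hy => ?_)
      all_goals rw [interior_Icc] at hy
      exacts [(hf' y hy.1).hasDerivWithinAt, hf'_nonpos y hy]
    exact hanti ⟨hx, hxc⟩ ⟨hac, le_rfl⟩ hxc
  · have hmono : MonotoneOn f (Ici c) := by
      refine monotoneOn_of_hasDerivWithinAt_nonneg (f' := f') (convex_Ici c)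
        (hf.mono (Ici_subset_Ici.mpr hac)) (fun y hy => ?_) (fun y hy => ?_)
      all_goals rw [interior_Ici] at hy
      exacts [(hf' y (hac.trans_lt hy)).hasDerivWithinAt, hf'_nonneg y hy]
    exact hmono self_mem_Ici hcx hcx

lemma sCost_one_right (x : ℝ) : sCost x 1 = x * log x - x + 1 := by
  rw [sCost, div_one]

lemma sCost_eq_mul_sCost_div (a : ℝ) {b : ℝ} (hb : b ≠ 0) :
    sCost a b = b * sCost (a / b) 1 := by
  rw [sCost, sCost_one_right]
  field_simp

lemma hasDerivAt_Ccost (y : ℝ) : HasDerivAt Ccost (arsinh (y / 2)) y :=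
  have hcont : Continuous fun t : ℝ => arsinh (t / 2) :=
    continuous_arsinh.comp (continuous_id.div_const 2)
  intervalIntegral.integral_hasDerivAt_right (hcont.intervalIntegrable _ _)
    hcont.aestronglyMeasurable.stronglyMeasurableAtFilter hcont.continuousAt

lemma continuous_Ccost : Continuous Ccost :=
  continuous_iff_continuousAt.mpr fun y => (hasDerivAt_Ccost y).continuousAt

lemma arsinh_sub_one_div_two_le_log {x : ℝ} (hx : 1 ≤ x) : arsinh ((x - 1) / 2) ≤ log x := by
  rw [← arsinh_sinh (log x), arsinh_le_arsinh, sinh_log (zero_lt_one.trans_le hx)]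
  have : x⁻¹ ≤ 1 := inv_le_one_of_one_le₀ hx
  linarith

lemma log_le_arsinh_sub_one_div_two {x : ℝ} (hx₀ : 0 < x) (hx₁ : x ≤ 1) :
    log x ≤ arsinh ((x - 1) / 2) := by
  rw [← arsinh_sinh (log x), arsinh_le_arsinh, sinh_log hx₀]
  have : 1 ≤ x⁻¹ := (one_le_inv₀ hx₀).mpr hx₁
  linarith

lemma Ccost_sub_one_le_sCost_one_right {x : ℝ} (hx : 0 ≤ x) : Ccost (x - 1) ≤ sCost x 1 := by
  set gap : ℝ → ℝ := fun x => sCost x 1 - Ccost (x - 1)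
  have hgap_cont : Continuous gap := by
    simp only [gap, sCost_one_right]
    exact ((continuous_mul_log.sub continuous_id).add continuous_const).sub
      (continuous_Ccost.comp (continuous_sub_right 1))
  have hgap_deriv : ∀ y ∈ Ioi (0 : ℝ),
      HasDerivAt gap (log y - arsinh ((y - 1) / 2)) y := fun y (hy : 0 < y) => by
    have hs : HasDerivAt (fun x => sCost x 1) (log y) y := by
      rw [show (fun x => sCost x 1) = fun x => x * log x - x + 1 from funext sCost_one_right]
      exact (((hasDerivAt_mul_log hy.ne').sub (hasDerivAt_id y)).add_const 1).congr_deriv (by ring)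
    exact hs.sub ((hasDerivAt_Ccost (y - 1)).comp_sub_const y 1)
  have hmin : IsMinOn gap (Ici 0) 1 :=
    isMinOn_of_hasDerivAt_nonpos_of_nonneg zero_le_one hgap_cont.continuousOn hgap_deriv
      (fun y hy => sub_nonpos.mpr (log_le_arsinh_sub_one_div_two hy.1 hy.2.le))
      (fun y hy => sub_nonneg.mpr (arsinh_sub_one_div_two_le_log hy.le))
  have hgap_one : gap 1 = 0 := by simp [gap, sCost_one_right, Ccost]
  have : gap 1 ≤ gap x := hmin (mem_Ici.mpr hx)
  simp only [hgap_one, gap] at this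
  linarith

/-- For `a ≥ 0` and `b > 0`: `s(a∣b) = b·s(a/b∣1)`, and consequently
`s(a∣b) ≥ b·𝒞((a − b)/b)`. -/
theorem sCost_scaling_and_Ccost_lower_bound (a b : ℝ) (ha : 0 ≤ a) (hb : 0 < b) :
    sCost a b = b * sCost (a / b) 1 ∧ b * Ccost ((a - b) / b) ≤ sCost a b := by
  have hscale := sCost_eq_mul_sCost_div a hb.ne'
  refine ⟨hscale, ?_⟩
  rw [hscale, sub_div, div_self hb.ne']
  exact mul_le_mul_of_nonneg_left (Ccost_sub_one_le_sCost_one_right (div_nonneg ha hb.le)) hb.le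
end

section
/- For all a,b ≥ 0 one has (√a − √b)² = sup { a·p + b·q : p,q ∈ ℝ, p < 1, q < 1, (p − 1)(q − 1) > 1 }; in particular a·p + b·q ≤ (√a − √b)² whenever p < 1, q < 1 and (p − 1)(q − 1) > 1. -/
/-! Put `a = x²`, `b = y²` with `x, y ≥ 0`, and `s = 1 - p`, `t = 1 - q`, so that the constraint reads
`s > 0`, `s t > 1`, and `a p + b q = x² + y² - (x² s + y² t)`. The identity
`s (x² s + y² t - 2 x y) = (x s - y)² + y² (s t - 1)` gives `x² s + y² t ≥ 2 x y`, i.e. the upper bound.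
The bound is approached by `s = (y + δ) / (x + δ)`, `t = (x + 2δ) / (y + δ)` as `δ → 0⁺`; the shift by
`δ` keeps `s t > 1` and covers the cases `x = 0` or `y = 0`. -/

lemma two_mul_le_sq_mul_add_sq_mul {x y s t : ℝ} (hs : 0 < s) (hst : 1 ≤ s * t) :
    2 * x * y ≤ x ^ 2 * s + y ^ 2 * t := by
  have key : 0 ≤ s * (x ^ 2 * s + y ^ 2 * t - 2 * x * y) := by
    have hsq : s * (x ^ 2 * s + y ^ 2 * t - 2 * x * y) = (x * s - y) ^ 2 + y ^ 2 * (s * t - 1) := by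
      ring
    rw [hsq]
    exact add_nonneg (sq_nonneg _) (mul_nonneg (sq_nonneg y) (sub_nonneg.2 hst))
  exact sub_nonneg.1 (nonneg_of_mul_nonneg_right key hs)

lemma sq_mul_add_sq_mul_le_sub_sq {x y p q : ℝ} (hp : p < 1) (hpq : 1 < (p - 1) * (q - 1)) :
    x ^ 2 * p + y ^ 2 * q ≤ (x - y) ^ 2 := by
  have h := two_mul_le_sq_mul_add_sq_mul (x := x) (y := y) (sub_pos.2 hp)
    (by linarith [show (1 - p) * (1 - q) = (p - 1) * (q - 1) by ring] : 1 ≤ (1 - p) * (1 - q))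
  linear_combination h

lemma exists_sub_mul_le_sq_mul_add_sq_mul {x y δ : ℝ} (hx : 0 ≤ x) (hy : 0 ≤ y) (hδ : 0 < δ) :
    ∃ p q : ℝ, p < 1 ∧ q < 1 ∧ 1 < (p - 1) * (q - 1) ∧
      (x - y) ^ 2 - δ * (x + 2 * y) ≤ x ^ 2 * p + y ^ 2 * q := by
  have hxδ : 0 < x + δ := by positivity
  have hyδ : 0 < y + δ := by positivity
  refine ⟨1 - (y + δ) / (x + δ), 1 - (x + 2 * δ) / (y + δ), sub_lt_self _ (by positivity),
    sub_lt_self _ (by positivity), ?_, ?_⟩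
  · have hprod : (1 - (y + δ) / (x + δ) - 1) * (1 - (x + 2 * δ) / (y + δ) - 1)
        = (x + 2 * δ) / (x + δ) := by
      field_simp
      ring
    rw [hprod, one_lt_div hxδ]
    linarith
  · have hs : x ^ 2 * ((y + δ) / (x + δ)) ≤ x * (y + δ) := by
      rw [show x ^ 2 * ((y + δ) / (x + δ)) = x * (y + δ) * (x / (x + δ)) by ring]
      exact mul_le_of_le_one_right (by positivity) (div_le_one_of_le₀ (by linarith) hxδ.le)
    have ht : y ^ 2 * ((x + 2 * δ) / (y + δ)) ≤ y * (x + 2 * δ) := by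
      rw [show y ^ 2 * ((x + 2 * δ) / (y + δ)) = y * (x + 2 * δ) * (y / (y + δ)) by ring]
      exact mul_le_of_le_one_right (by positivity) (div_le_one_of_le₀ (by linarith) hyδ.le)
    linear_combination hs + ht

lemma exists_sub_le_sq_mul_add_sq_mul {x y ε : ℝ} (hx : 0 ≤ x) (hy : 0 ≤ y) (hε : 0 < ε) :
    ∃ p q : ℝ, p < 1 ∧ q < 1 ∧ 1 < (p - 1) * (q - 1) ∧
      (x - y) ^ 2 - ε ≤ x ^ 2 * p + y ^ 2 * q := by
  have hc : 0 < x + 2 * y + 1 := by positivity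
  obtain ⟨p, q, hp, hq, hpq, hle⟩ :=
    exists_sub_mul_le_sq_mul_add_sq_mul hx hy (div_pos hε hc)
  refine ⟨p, q, hp, hq, hpq, le_trans ?_ hle⟩
  have hδ : ε / (x + 2 * y + 1) * (x + 2 * y) ≤ ε := by
    rw [div_mul_eq_mul_div, div_le_iff₀ hc]
    nlinarith
  linarith

/-- For nonnegative reals `a, b`, the Fisher-information integrand `(√a − √b)²` is the
supremum of `a·p + b·q` over `p < 1`, `q < 1` with `(p − 1)(q − 1) > 1`; in particular
`a·p + b·q ≤ (√a − √b)²` for all such `p, q`. -/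
theorem fisher_integrand_dual (a b : ℝ) (ha : 0 ≤ a) (hb : 0 ≤ b) :
    IsLUB {v : ℝ | ∃ p q : ℝ, p < 1 ∧ q < 1 ∧ 1 < (p - 1) * (q - 1) ∧ v = a * p + b * q}
      ((Real.sqrt a - Real.sqrt b) ^ 2) ∧
    ∀ p q : ℝ, p < 1 → q < 1 → 1 < (p - 1) * (q - 1) →
      a * p + b * q ≤ (Real.sqrt a - Real.sqrt b) ^ 2 := by
  obtain ⟨x, hx, rfl⟩ : ∃ x, 0 ≤ x ∧ x ^ 2 = a := ⟨√a, Real.sqrt_nonneg a, Real.sq_sqrt ha⟩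
  obtain ⟨y, hy, rfl⟩ : ∃ y, 0 ≤ y ∧ y ^ 2 = b := ⟨√b, Real.sqrt_nonneg b, Real.sq_sqrt hb⟩
  rw [Real.sqrt_sq hx, Real.sqrt_sq hy]
  refine ⟨⟨?_, fun w hw => ?_⟩, fun p q hp _ hpq => sq_mul_add_sq_mul_le_sub_sq hp hpq⟩
  · rintro _ ⟨p, q, hp, -, hpq, rfl⟩
    exact sq_mul_add_sq_mul_le_sub_sq hp hpq
  · refine le_of_forall_pos_le_add fun ε hε => ?_
    obtain ⟨p, q, hp, hq, hpq, hle⟩ := exists_sub_le_sq_mul_add_sq_mul hx hy hε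
    linarith [hw ⟨p, q, hp, hq, hpq, rfl⟩]
end

section
/- Let T > 0 and let u, v ∈ L¹([0,T]) be nonnegative. Then ∫₀ᵀ (√(u(t)) − √(v(t)))² dt equals the supremum, over all continuous functions p, q : [0,T] → ℝ satisfying p(t) < 1, q(t) < 1 and (p(t) − 1)(q(t) − 1) > 1 for every t ∈ [0,T], of ∫₀ᵀ ( p(t)·u(t) + q(t)·v(t) ) dt. -/
/-!
Write `f = √u` and `g = √v`. If `p, q < 1` and `(1 - p)(1 - q) > 1`, AM–GM gives
`(1 - p) f² + (1 - q) g² ≥ 2 f g`, i.e. `p u + q v ≤ (f - g)²` pointwise; this is the upper bound.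

Conversely, for `s > 1` and continuous `λ > 0` the pair `p = 1 - s λ`, `q = 1 - s / λ` is
admissible, so it suffices to make `∫ (λ u + v / λ)` as close to `2 ∫ f g` as we like. The
choice `λ = (g + δ) / (f + δ)` gives `λ u + v / λ ≤ 2 f g + δ (f + g)`. Truncating `f` and `g` at
level `n` keeps `λ` between two positive constants, bounded measurable functions are a.e. limits
of continuous ones with the same bounds, and dominated convergence carries the estimate over to
continuous `λ`.
-/

open MeasureTheory Set Filter Topology

theorem mul_add_mul_le_sqrt_sub_sq {a b p q : ℝ} (ha : 0 ≤ a) (hb : 0 ≤ b) (hp : p < 1)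
    (hpq : 1 ≤ (p - 1) * (q - 1)) : p * a + q * b ≤ (√a - √b) ^ 2 := by
  have hsa := Real.sq_sqrt ha
  have hsb := Real.sq_sqrt hb
  have hrs := sub_nonneg.2 hpq
  have key : 0 ≤ (1 - p) * ((1 - p) * a + (1 - q) * b - 2 * (√a * √b)) := by
    have : (1 - p) * ((1 - p) * a + (1 - q) * b - 2 * (√a * √b))
        = ((1 - p) * √a - √b) ^ 2 + ((p - 1) * (q - 1) - 1) * √b ^ 2 := by
      linear_combination (-(1 - p) ^ 2) * hsa - (1 - p) * (1 - q) * hsb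
    rw [this]
    positivity
  have := nonneg_of_mul_nonneg_right key (by linarith)
  nlinarith

theorem norm_mul_add_div_le {a b l s t : ℝ} (ha : 0 < a) (hl : l ∈ Icc a b) :
    ‖l * s + t / l‖ ≤ b * |s| + a⁻¹ * |t| := by
  have hl0 : 0 < l := ha.trans_le hl.1
  calc ‖l * s + t / l‖ ≤ l * |s| + l⁻¹ * |t| := by
        rw [Real.norm_eq_abs, div_eq_inv_mul]
        refine (abs_add_le _ _).trans_eq ?_
        rw [abs_mul, abs_mul, abs_of_pos hl0, abs_of_pos (inv_pos.2 hl0)]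
    _ ≤ b * |s| + a⁻¹ * |t| := by
        gcongr
        exacts [hl.2, hl.1]

theorem add_div_add_mul_sq_le {f g δ : ℝ} (hf : 0 ≤ f) (hg : 0 ≤ g) (hδ : 0 < δ) :
    (g + δ) / (f + δ) * f ^ 2 ≤ (g + δ) * f := by
  rw [div_mul_eq_mul_div, div_le_iff₀ (by positivity)]
  nlinarith [mul_nonneg (mul_nonneg (add_nonneg hg hδ.le) hf) hδ.le]

theorem min_add_div_min_add_mul_sq_le {f g K δ : ℝ} (hf : 0 ≤ f) (hg : 0 ≤ g) (hK : 0 ≤ K)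
    (hδ : 0 < δ) : (min g K + δ) / (min f K + δ) * f ^ 2 ≤ (g + δ) * f + f ^ 2 := by
  rcases le_total f K with hfK | hKf
  · rw [min_eq_left hfK]
    calc (min g K + δ) / (f + δ) * f ^ 2 ≤ (min g K + δ) * f :=
          add_div_add_mul_sq_le hf (le_min hg hK) hδ
      _ ≤ (g + δ) * f + f ^ 2 := by nlinarith [min_le_left g K, sq_nonneg f]
  · rw [min_eq_right hKf]
    have : (min g K + δ) / (K + δ) ≤ 1 :=
      (div_le_one (by positivity)).2 (by linarith [min_le_right g K])
    nlinarith [mul_nonneg (add_nonneg hg hδ.le) hf, sq_nonneg f]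

theorem add_div_add_mul_sq_add_sq_div_le {f g δ : ℝ} (hf : 0 ≤ f) (hg : 0 ≤ g) (hδ : 0 < δ) :
    (g + δ) / (f + δ) * f ^ 2 + g ^ 2 / ((g + δ) / (f + δ)) ≤ 2 * (f * g) + δ * (f + g) := by
  rw [div_div_eq_mul_div, mul_comm (g ^ 2), ← div_mul_eq_mul_div]
  linarith [add_div_add_mul_sq_le hf hg hδ, add_div_add_mul_sq_le hg hf hδ]

theorem min_add_div_min_add_mul_sq_add_sq_div_le {f g K δ : ℝ} (hf : 0 ≤ f) (hg : 0 ≤ g)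
    (hK : 0 ≤ K) (hδ : 0 < δ) :
    (min g K + δ) / (min f K + δ) * f ^ 2 + g ^ 2 / ((min g K + δ) / (min f K + δ))
      ≤ 2 * (f * g) + δ * (f + g) + f ^ 2 + g ^ 2 := by
  rw [div_div_eq_mul_div, mul_comm (g ^ 2), ← div_mul_eq_mul_div]
  linarith [min_add_div_min_add_mul_sq_le hf hg hK hδ, min_add_div_min_add_mul_sq_le hg hf hK hδ]

theorem min_add_div_min_add_mem_Icc {f g K δ : ℝ} (hf : 0 ≤ f) (hg : 0 ≤ g) (hK : 0 ≤ K)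
    (hδ : 0 < δ) : (min g K + δ) / (min f K + δ) ∈ Icc (δ / (K + δ)) ((K + δ) / δ) := by
  have hlo : ∀ y, 0 ≤ y → δ ≤ min y K + δ := fun y hy ↦ by linarith [le_min hy hK]
  have hhi : ∀ y, min y K + δ ≤ K + δ := fun y ↦ by linarith [min_le_right y K]
  exact ⟨div_le_div₀ (by linarith [hlo g hg]) (hlo g hg) (by positivity) (hhi f),
    div_le_div₀ (by positivity) (hhi g) hδ (hlo f hf)⟩

section

variable {X : Type*} [MeasurableSpace X] {μ : Measure X} {u v : X → ℝ}

theorem memLp_two_sqrt (hu : Integrable u μ) (hu0 : 0 ≤ᵐ[μ] u) : MemLp (fun x ↦ √(u x)) 2 μ := by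
  have hm : AEStronglyMeasurable (fun x ↦ √(u x)) μ :=
    Real.continuous_sqrt.comp_aestronglyMeasurable hu.aestronglyMeasurable
  refine (memLp_two_iff_integrable_sq hm).2 (hu.congr ?_)
  filter_upwards [hu0] with x hx using (Real.sq_sqrt hx).symm

theorem integrable_sqrt_mul_sqrt (hu : Integrable u μ) (hv : Integrable v μ)
    (hu0 : 0 ≤ᵐ[μ] u) (hv0 : 0 ≤ᵐ[μ] v) : Integrable (fun x ↦ √(u x) * √(v x)) μ :=
  (memLp_two_sqrt hu hu0).integrable_mul (memLp_two_sqrt hv hv0)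

theorem integral_sqrt_sub_sq (hu : Integrable u μ) (hv : Integrable v μ)
    (hu0 : 0 ≤ᵐ[μ] u) (hv0 : 0 ≤ᵐ[μ] v) :
    ∫ x, (√(u x) - √(v x)) ^ 2 ∂μ = ∫ x, (u x + v x) ∂μ - 2 * ∫ x, √(u x) * √(v x) ∂μ := by
  rw [← integral_const_mul, ← integral_sub (f := fun x ↦ u x + v x) (hu.add hv)
    ((integrable_sqrt_mul_sqrt hu hv hu0 hv0).const_mul 2)]
  refine integral_congr_ae ?_
  filter_upwards [hu0, hv0] with x hx hy
  linear_combination Real.sq_sqrt hx + Real.sq_sqrt hy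

theorem integral_mul_add_mul_le_integral_sqrt_sub_sq (hu : Integrable u μ) (hv : Integrable v μ)
    (hu0 : 0 ≤ᵐ[μ] u) (hv0 : 0 ≤ᵐ[μ] v) {p q : X → ℝ}
    (hpq : Integrable (fun x ↦ p x * u x + q x * v x) μ)
    (hcond : ∀ᵐ x ∂μ, p x < 1 ∧ 1 ≤ (p x - 1) * (q x - 1)) :
    ∫ x, (p x * u x + q x * v x) ∂μ ≤ ∫ x, (√(u x) - √(v x)) ^ 2 ∂μ := by
  refine integral_mono_ae hpq ((memLp_two_sqrt hu hu0).sub (memLp_two_sqrt hv hv0)).integrable_sq ?_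
  filter_upwards [hu0, hv0, hcond] with x hx hy ⟨hp, hpq⟩
  exact mul_add_mul_le_sqrt_sub_sq hx hy hp hpq

/-- Its infimum over positive `l` is `2 ∫ √(u v) dμ`, formally attained at `l = √(v / u)`. -/
noncomputable def hellingerFunctional (μ : Measure X) (u v l : X → ℝ) : ℝ :=
  ∫ x, (l x * u x + v x / l x) ∂μ

theorem integrable_mul_add_div (hu : Integrable u μ) (hv : Integrable v μ) {l : X → ℝ}
    (hl : AEStronglyMeasurable l μ) {a b : ℝ} (ha : 0 < a) (hlab : ∀ x, l x ∈ Icc a b) :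
    Integrable (fun x ↦ l x * u x + v x / l x) μ := by
  refine Integrable.mono' ((hu.abs.const_mul b).add (hv.abs.const_mul a⁻¹)) ?_
    (Eventually.of_forall fun x ↦ norm_mul_add_div_le ha (hlab x))
  exact (hl.mul hu.aestronglyMeasurable).add (hv.aestronglyMeasurable.div₀ hl)

theorem tendsto_hellingerFunctional (hu : Integrable u μ) (hv : Integrable v μ)
    {l : ℕ → X → ℝ} {w : X → ℝ} (hl : ∀ n, AEStronglyMeasurable (l n) μ) {a b : ℝ} (ha : 0 < a)
    (hlab : ∀ n x, l n x ∈ Icc a b) (hlim : ∀ᵐ x ∂μ, Tendsto (fun n ↦ l n x) atTop (𝓝 (w x))) :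
    Tendsto (fun n ↦ hellingerFunctional μ u v (l n)) atTop
      (𝓝 (hellingerFunctional μ u v w)) := by
  refine tendsto_integral_of_dominated_convergence (fun x ↦ b * |u x| + a⁻¹ * |v x|)
    (fun n ↦ ((hl n).mul hu.aestronglyMeasurable).add (hv.aestronglyMeasurable.div₀ (hl n)))
    ((hu.abs.const_mul b).add (hv.abs.const_mul a⁻¹))
    (fun n ↦ Eventually.of_forall fun x ↦ norm_mul_add_div_le ha (hlab n x)) ?_
  filter_upwards [hlim] with x hx
  have hw : w x ≠ 0 := (ha.trans_le (ge_of_tendsto' hx fun n ↦ (hlab n x).1)).ne'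
  exact (hx.mul_const _).add (tendsto_const_nhds.div hx hw)

theorem hellingerFunctional_add_div_add_le [IsFiniteMeasure μ] (hu : Integrable u μ)
    (hv : Integrable v μ) (hu0 : 0 ≤ᵐ[μ] u) (hv0 : 0 ≤ᵐ[μ] v) {δ : ℝ} (hδ : 0 < δ) :
    hellingerFunctional μ u v (fun x ↦ (√(v x) + δ) / (√(u x) + δ)) ≤
      2 * ∫ x, √(u x) * √(v x) ∂μ + δ * ∫ x, (√(u x) + √(v x)) ∂μ := by
  have hsu := (memLp_two_sqrt hu hu0).integrable one_le_two
  have hsv := (memLp_two_sqrt hv hv0).integrable one_le_two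
  have hsum : Integrable (fun x ↦ √(u x) + √(v x)) μ := hsu.add hsv
  have hprod := integrable_sqrt_mul_sqrt hu hv hu0 hv0
  rw [← integral_const_mul, ← integral_const_mul,
    ← integral_add (hprod.const_mul 2) (hsum.const_mul δ)]
  refine integral_mono_of_nonneg ?_ ((hprod.const_mul 2).add (hsum.const_mul δ)) ?_
  · filter_upwards [hu0, hv0] with x hx hy
    have : 0 < (√(v x) + δ) / (√(u x) + δ) := by positivity
    exact add_nonneg (mul_nonneg this.le hx) (div_nonneg hy this.le)
  · filter_upwards [hu0, hv0] with x hx hy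
    have := add_div_add_mul_sq_add_sq_div_le (Real.sqrt_nonneg (u x)) (Real.sqrt_nonneg (v x)) hδ
    rwa [Real.sq_sqrt hx, Real.sq_sqrt hy] at this

theorem tendsto_hellingerFunctional_min_add_div_min_add [IsFiniteMeasure μ]
    (hu : Integrable u μ) (hv : Integrable v μ) (hu0 : 0 ≤ᵐ[μ] u) (hv0 : 0 ≤ᵐ[μ] v)
    {δ : ℝ} (hδ : 0 < δ) :
    Tendsto (fun n : ℕ ↦ hellingerFunctional μ u v
        (fun x ↦ (min √(v x) n + δ) / (min √(u x) n + δ))) atTop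
      (𝓝 (hellingerFunctional μ u v (fun x ↦ (√(v x) + δ) / (√(u x) + δ)))) := by
  have hsu := (memLp_two_sqrt hu hu0).integrable one_le_two
  have hsv := (memLp_two_sqrt hv hv0).integrable one_le_two
  have hu' := hu.aemeasurable
  have hv' := hv.aemeasurable
  refine tendsto_integral_of_dominated_convergence
    (fun x ↦ 2 * (√(u x) * √(v x)) + δ * (√(u x) + √(v x)) + u x + v x)
    (fun n ↦ (by fun_prop : AEMeasurable _ μ).aestronglyMeasurable)
    ((((integrable_sqrt_mul_sqrt hu hv hu0 hv0).const_mul 2).add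
      ((hsu.add hsv).const_mul δ)).add hu |>.add hv) (fun n ↦ ?_) ?_
  · filter_upwards [hu0, hv0] with x hx hy
    have hpos : 0 < (min √(v x) n + δ) / (min √(u x) n + δ) := by positivity
    rw [Real.norm_of_nonneg (add_nonneg (mul_nonneg hpos.le hx) (div_nonneg hy hpos.le))]
    have := min_add_div_min_add_mul_sq_add_sq_div_le (Real.sqrt_nonneg (u x))
      (Real.sqrt_nonneg (v x)) n.cast_nonneg hδ
    rwa [Real.sq_sqrt hx, Real.sq_sqrt hy] at this
  · refine Eventually.of_forall fun x ↦ tendsto_const_nhds.congr' ?_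
    filter_upwards [tendsto_natCast_atTop_atTop.eventually_ge_atTop (max √(u x) √(v x))]
      with n hn
    rw [min_eq_left ((le_max_left _ _).trans hn), min_eq_left ((le_max_right _ _).trans hn)]

theorem sub_le_hellingerFunctional [TopologicalSpace X] [OpensMeasurableSpace X]
    (hu : Integrable u μ) (hv : Integrable v μ) {B : ℝ}
    (hB : ∀ p q : X → ℝ, Continuous p → Continuous q →
      (∀ x, p x < 1 ∧ q x < 1 ∧ 1 < (p x - 1) * (q x - 1)) →
        ∫ x, (p x * u x + q x * v x) ∂μ ≤ B)
    {a b : ℝ} (ha : 0 < a) {l : X → ℝ} (hl : Continuous l) (hlab : ∀ x, l x ∈ Icc a b) :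
    ∫ x, (u x + v x) ∂μ - B ≤ hellingerFunctional μ u v l := by
  have hl0 : ∀ x, 0 < l x := fun x ↦ ha.trans_le (hlab x).1
  have hJ := integrable_mul_add_div hu hv hl.aestronglyMeasurable ha hlab
  have hscaled : ∀ s > 1, ∫ x, (u x + v x) ∂μ - s * hellingerFunctional μ u v l ≤ B := by
    intro s hs
    convert hB (fun x ↦ 1 - s * l x) (fun x ↦ 1 - s / l x) (by fun_prop)
      (continuous_const.sub (continuous_const.div hl fun x ↦ (hl0 x).ne')) fun x ↦ ?_ using 1
    · rw [hellingerFunctional, ← integral_const_mul,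
        ← integral_sub (f := fun x ↦ u x + v x) (hu.add hv) (hJ.const_mul s)]
      refine integral_congr_ae (Eventually.of_forall fun x ↦ ?_)
      simp only
      ring
    · have hsl : 0 < s * l x := mul_pos (by linarith) (hl0 x)
      have hprod : (1 - s * l x - 1) * (1 - s / l x - 1) = s ^ 2 := by
        field_simp [(hl0 x).ne']
        ring
      refine ⟨by linarith, by linarith [div_pos (by linarith : (0 : ℝ) < s) (hl0 x)], ?_⟩
      nlinarith
  have hlim : Tendsto (fun s ↦ s * hellingerFunctional μ u v l) (𝓝[>] 1)
      (𝓝 (hellingerFunctional μ u v l)) := by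
    simpa using (tendsto_id.mul_const (hellingerFunctional μ u v l)).mono_left
      (nhdsWithin_le_nhds (a := (1 : ℝ)))
  refine ge_of_tendsto hlim (eventually_nhdsWithin_of_forall fun s hs ↦ ?_)
  linarith [hscaled s hs]

variable [TopologicalSpace X] [NormalSpace X] [BorelSpace X] [IsFiniteMeasure μ]
  [μ.WeaklyRegular]

theorem exists_seq_continuous_tendsto_ae {w : X → ℝ} (hw : AEStronglyMeasurable w μ) {a b : ℝ}
    (hab : a ≤ b) (hwab : ∀ᵐ x ∂μ, w x ∈ Icc a b) :
    ∃ l : ℕ → X → ℝ, (∀ n, Continuous (l n)) ∧ (∀ n x, l n x ∈ Icc a b) ∧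
      ∀ᵐ x ∂μ, Tendsto (fun n ↦ l n x) atTop (𝓝 (w x)) := by
  have hw1 : MemLp w 1 μ := MemLp.of_bound hw (max |a| |b|) (by
    filter_upwards [hwab] with x hx
    exact abs_le_max_abs_abs hx.1 hx.2)
  choose g hg _ using fun n : ℕ ↦
    hw1.exists_boundedContinuous_eLpNorm_sub_le ENNReal.one_ne_top
      (ENNReal.inv_ne_zero.2 (ENNReal.natCast_ne_top n))
  have hconv : TendstoInMeasure μ (fun n ↦ ⇑(g n)) atTop w := by
    refine tendstoInMeasure_of_tendsto_eLpNorm one_ne_zero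
      (fun n ↦ (g n).continuous.aestronglyMeasurable) hw ?_
    refine tendsto_of_tendsto_of_tendsto_of_le_of_le tendsto_const_nhds
      ENNReal.tendsto_inv_nat_nhds_zero (fun _ ↦ bot_le) fun n ↦ ?_
    rw [eLpNorm_sub_comm]
    exact hg n
  obtain ⟨ns, -, hns⟩ := hconv.exists_seq_tendsto_ae
  have hproj : Continuous fun y : ℝ ↦ (projIcc a b hab y : ℝ) :=
    continuous_subtype_val.comp continuous_projIcc
  refine ⟨fun n x ↦ projIcc a b hab (g (ns n) x), fun n ↦ hproj.comp (g (ns n)).continuous,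
    fun n x ↦ Subtype.prop _, ?_⟩
  filter_upwards [hns, hwab] with x hx hxab
  simpa only [Function.comp_def, projIcc_of_mem hab hxab] using (hproj.tendsto (w x)).comp hx

theorem le_hellingerFunctional_of_forall_continuous (hu : Integrable u μ) (hv : Integrable v μ)
    {c a b : ℝ} (ha : 0 < a) (hab : a ≤ b)
    (hc : ∀ l, Continuous l → (∀ x, l x ∈ Icc a b) → c ≤ hellingerFunctional μ u v l)
    {w : X → ℝ} (hw : AEStronglyMeasurable w μ) (hwab : ∀ x, w x ∈ Icc a b) :
    c ≤ hellingerFunctional μ u v w := by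
  obtain ⟨l, hl, hlab, hlim⟩ :=
    exists_seq_continuous_tendsto_ae hw hab (Eventually.of_forall hwab)
  exact ge_of_tendsto (tendsto_hellingerFunctional hu hv (fun n ↦ (hl n).aestronglyMeasurable)
    ha hlab hlim) (Eventually.of_forall fun n ↦ hc _ (hl n) (hlab n))

theorem le_hellingerFunctional_add_div_add (hu : Integrable u μ) (hv : Integrable v μ)
    (hu0 : 0 ≤ᵐ[μ] u) (hv0 : 0 ≤ᵐ[μ] v) {c δ : ℝ} (hδ : 0 < δ)
    (hc : ∀ a b : ℝ, 0 < a → ∀ l, Continuous l → (∀ x, l x ∈ Icc a b) →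
      c ≤ hellingerFunctional μ u v l) :
    c ≤ hellingerFunctional μ u v (fun x ↦ (√(v x) + δ) / (√(u x) + δ)) := by
  refine ge_of_tendsto (tendsto_hellingerFunctional_min_add_div_min_add hu hv hu0 hv0 hδ)
    (Eventually.of_forall fun n ↦ ?_)
  have hn : (0 : ℝ) ≤ n := n.cast_nonneg
  have hu' := hu.aemeasurable
  have hv' := hv.aemeasurable
  exact le_hellingerFunctional_of_forall_continuous hu hv (by positivity)
    (((div_le_one (by positivity)).2 (by linarith)).trans ((one_le_div hδ).2 (by linarith)))
    (hc _ _ (by positivity)) (by fun_prop : AEMeasurable _ μ).aestronglyMeasurable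
    fun x ↦ min_add_div_min_add_mem_Icc (Real.sqrt_nonneg _) (Real.sqrt_nonneg _) hn hδ

theorem le_two_mul_integral_sqrt_mul_sqrt (hu : Integrable u μ) (hv : Integrable v μ)
    (hu0 : 0 ≤ᵐ[μ] u) (hv0 : 0 ≤ᵐ[μ] v) {c : ℝ}
    (hc : ∀ a b : ℝ, 0 < a → ∀ l, Continuous l → (∀ x, l x ∈ Icc a b) →
      c ≤ hellingerFunctional μ u v l) :
    c ≤ 2 * ∫ x, √(u x) * √(v x) ∂μ := by
  set G := ∫ x, √(u x) * √(v x) ∂μ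
  set S := ∫ x, (√(u x) + √(v x)) ∂μ
  have hlim : Tendsto (fun δ ↦ 2 * G + δ * S) (𝓝[>] 0) (𝓝 (2 * G)) := by
    simpa using (tendsto_const_nhds.add (tendsto_id.mul_const S)).mono_left
      (nhdsWithin_le_nhds (a := (0 : ℝ)))
  refine ge_of_tendsto hlim (eventually_nhdsWithin_of_forall fun δ (hδ : 0 < δ) ↦ ?_)
  exact (le_hellingerFunctional_add_div_add hu hv hu0 hv0 hδ hc).trans
    (hellingerFunctional_add_div_add_le hu hv hu0 hv0 hδ)

end

theorem fisher_information_dual_general (T : ℝ) (u v : ℝ → ℝ)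
    (hu : IntegrableOn u (Icc 0 T)) (hv : IntegrableOn v (Icc 0 T))
    (hu0 : ∀ t ∈ Icc (0:ℝ) T, 0 ≤ u t) (hv0 : ∀ t ∈ Icc (0:ℝ) T, 0 ≤ v t) :
    IsLUB {x : ℝ | ∃ p q : ℝ → ℝ, ContinuousOn p (Icc 0 T) ∧ ContinuousOn q (Icc 0 T) ∧
        (∀ t ∈ Icc (0:ℝ) T, p t < 1 ∧ q t < 1 ∧ 1 < (p t - 1) * (q t - 1)) ∧
        x = ∫ t in Icc (0:ℝ) T, (p t * u t + q t * v t)}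
      (∫ t in Icc (0:ℝ) T, (Real.sqrt (u t) - Real.sqrt (v t)) ^ 2) := by
  have hu0' : 0 ≤ᵐ[volume.restrict (Icc 0 T)] u := ae_restrict_of_forall_mem measurableSet_Icc hu0
  have hv0' : 0 ≤ᵐ[volume.restrict (Icc 0 T)] v := ae_restrict_of_forall_mem measurableSet_Icc hv0
  constructor
  · rintro x ⟨p, q, hp, hq, hpq, rfl⟩
    exact integral_mul_add_mul_le_integral_sqrt_sub_sq hu hv hu0' hv0'
      ((hu.continuousOn_mul hp isCompact_Icc).add (hv.continuousOn_mul hq isCompact_Icc))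
      (ae_restrict_of_forall_mem measurableSet_Icc fun t ht ↦ ⟨(hpq t ht).1, (hpq t ht).2.2.le⟩)
  · intro B hB
    have := le_two_mul_integral_sqrt_mul_sqrt hu hv hu0' hv0' fun a b ha l hl hlab ↦
      sub_le_hellingerFunctional hu hv (fun p q hp hq hpq ↦
        hB ⟨p, q, hp.continuousOn, hq.continuousOn, fun t _ ↦ hpq t, rfl⟩) ha hl hlab
    rw [integral_sqrt_sub_sq hu hv hu0' hv0']
    linarith

/-- The Fisher information `∫₀ᵀ (√u − √v)² dt` is the supremum of
`∫₀ᵀ (p·u + q·v) dt` over continuous `p, q : [0,T] → ℝ` with `p(t) < 1`, `q(t) < 1`,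
`(p(t)−1)(q(t)−1) > 1` for every `t ∈ [0,T]`. -/
theorem fisher_information_dual (T : ℝ) (hT : 0 < T) (u v : ℝ → ℝ)
    (hu : IntegrableOn u (Icc 0 T)) (hv : IntegrableOn v (Icc 0 T))
    (hu0 : ∀ t ∈ Icc (0:ℝ) T, 0 ≤ u t) (hv0 : ∀ t ∈ Icc (0:ℝ) T, 0 ≤ v t) :
    IsLUB {x : ℝ | ∃ p q : ℝ → ℝ, ContinuousOn p (Icc 0 T) ∧ ContinuousOn q (Icc 0 T) ∧
        (∀ t ∈ Icc (0:ℝ) T, p t < 1 ∧ q t < 1 ∧ 1 < (p t - 1) * (q t - 1)) ∧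
        x = ∫ t in Icc (0:ℝ) T, (p t * u t + q t * v t)}
      (∫ t in Icc (0:ℝ) T, (Real.sqrt (u t) - Real.sqrt (v t)) ^ 2) :=
  fisher_information_dual_general T u v hu hv hu0 hv0
end

section
/- Let T > 0, let u ∈ L¹([0,T]) be nonnegative and let j ∈ L¹([0,T]) be nonnegative. Then sup_{ζ ∈ C([0,T])} ∫₀ᵀ [ ζ(t)·j(t) − u(t)·(e^{ζ(t)} − 1) ] dt = ∫₀ᵀ s(j(t)∣u(t)) dt, where both sides take values in [0,∞]; in particular the supremum is infinite unless j(t) = 0 for almost every t with u(t) = 0. -/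
/-! Pointwise, `s(a∣b) = sup_z (z a - b (e^z - 1))` (Fenchel–Young), which gives `≤`. For `≥`,
the truncated log-ratios `φₙ = max (-n) (min n (log (j / u)))` make the integrand nonnegative and
converge pointwise to `s(j∣u)`, so by Fatou's lemma they form a maximizing sequence. Each bounded
measurable `φₙ` is the a.e. limit of uniformly bounded continuous functions, and dominated
convergence transfers the bound to continuous test functions. -/

open MeasureTheory Set
open scoped ENNReal

/-- The extended-value Boltzmann cost `s(a∣b) ∈ [0,∞]` for `a, b ≥ 0`:
`s(a∣b) = a·log(a/b) − a + b` if `b > 0` (this includes `s(0∣b) = b` since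
`Real.log 0 = 0`), `s(0∣0) = 0` and `s(a∣0) = ∞` for `a > 0`. -/
noncomputable def sCostE (a b : ℝ) : ℝ≥0∞ :=
  if b = 0 then (if a = 0 then 0 else ⊤)
  else ENNReal.ofReal (a * Real.log (a / b) - a + b)

open Filter Topology Real

noncomputable def dualIntegrand (z a b : ℝ) : ℝ := z * a - b * (exp z - 1)

section Pointwise

variable {z a b : ℝ}

theorem continuous_dualIntegrand (a b : ℝ) : Continuous fun z ↦ dualIntegrand z a b := by
  unfold dualIntegrand; fun_prop

theorem dualIntegrand_log_div (ha : 0 < a) (hb : 0 < b) :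
    dualIntegrand (log (a / b)) a b = a * log (a / b) - a + b := by
  rw [dualIntegrand, exp_log (div_pos ha hb)]
  field_simp
  ring

/-- Fenchel–Young inequality: `s(a∣b)` is the Legendre transform of `z ↦ b (e^z - 1)` at `a`. -/
theorem dualIntegrand_le_sCost (ha : 0 ≤ a) (hb : 0 < b) :
    dualIntegrand z a b ≤ a * log (a / b) - a + b := by
  rcases ha.eq_or_lt with rfl | ha
  · simp only [dualIntegrand, mul_zero, zero_div, log_zero]
    nlinarith [exp_pos z]
  · have h := mul_le_mul_of_nonneg_left (add_one_le_exp (z - log (a / b))) ha.le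
    rw [exp_sub, exp_log (div_pos ha hb)] at h
    rw [dualIntegrand]
    field_simp at h
    nlinarith

theorem ofReal_dualIntegrand_le_sCostE (ha : 0 ≤ a) (hb : 0 ≤ b) :
    ENNReal.ofReal (dualIntegrand z a b) ≤ sCostE a b := by
  rcases hb.eq_or_lt with rfl | hb
  · rcases ha.eq_or_lt with rfl | ha
    · simp [dualIntegrand, sCostE]
    · simp [sCostE, ha.ne']
  · rw [sCostE, if_neg hb.ne']
    exact ENNReal.ofReal_le_ofReal (dualIntegrand_le_sCost ha hb)

/-- The objective is concave in `z` with maximum at `log (a / b)` and value `0` at `z = 0`, so it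
is nonnegative between these two points, i.e. where `0 ≤ z * (log (a / b) - z)`. -/
theorem dualIntegrand_nonneg (ha : 0 < a) (hb : 0 < b) (hz : 0 ≤ z * (log (a / b) - z)) :
    0 ≤ dualIntegrand z a b := by
  have hexp : z * exp z ≤ z * (a / b) := by
    rw [← exp_log (div_pos ha hb)]
    rcases lt_trichotomy z 0 with h | rfl | h
    · exact mul_le_mul_of_nonpos_left (exp_le_exp.2 (by nlinarith)) h.le
    · simp
    · exact mul_le_mul_of_nonneg_left (exp_le_exp.2 (by nlinarith)) h.le
  have h1 : exp z - 1 ≤ z * exp z := by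
    have := mul_le_mul_of_nonneg_left (add_one_le_exp (-z)) (exp_pos z).le
    rw [← exp_add, add_neg_cancel, exp_zero] at this
    linarith
  have : b * (exp z - 1) ≤ z * a := by
    calc b * (exp z - 1) ≤ b * (z * (a / b)) := by gcongr; linarith
      _ = z * a := by field_simp
  simp only [dualIntegrand]
  linarith

theorem abs_dualIntegrand_le {C : ℝ} (hz : |z| ≤ C) :
    |dualIntegrand z a b| ≤ C * |a| + (exp C + 1) * |b| := by
  have hexp : |exp z - 1| ≤ exp C + 1 := by
    have := exp_le_exp.2 ((le_abs_self z).trans hz)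
    rw [abs_le]; constructor <;> linarith [exp_pos z, exp_pos C]
  calc |dualIntegrand z a b| ≤ |z| * |a| + |b| * |exp z - 1| := by
        rw [dualIntegrand, ← abs_mul, ← abs_mul]; exact abs_sub _ _
    _ ≤ C * |a| + (exp C + 1) * |b| := by
        rw [mul_comm |b|]; gcongr

end Pointwise

/-- `log (a / b)` truncated to `[-n, n]`, with `log (a / 0) = +∞` and `log (0 / b) = -∞`. -/
noncomputable def truncLogRatio (n : ℕ) (a b : ℝ) : ℝ :=
  if b = 0 then n else if a = 0 then -n else max (-n) (min n (log (a / b)))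

section TruncLogRatio

variable {a b : ℝ}

theorem measurable_truncLogRatio (n : ℕ) :
    Measurable fun p : ℝ × ℝ ↦ truncLogRatio n p.1 p.2 := by
  refine .ite (measurable_snd (measurableSet_singleton 0)) measurable_const
    (.ite (measurable_fst (measurableSet_singleton 0)) measurable_const ?_)
  fun_prop

theorem abs_truncLogRatio_le (n : ℕ) (a b : ℝ) : |truncLogRatio n a b| ≤ n := by
  unfold truncLogRatio
  split_ifs
  · simp
  · simp
  · exact abs_le.2 ⟨le_max_left _ _, max_le (by simp) (min_le_left _ _)⟩

theorem dualIntegrand_truncLogRatio_nonneg (n : ℕ) (ha : 0 ≤ a) (hb : 0 ≤ b) :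
    0 ≤ dualIntegrand (truncLogRatio n a b) a b := by
  unfold truncLogRatio
  split_ifs with hb0 ha0
  · simp only [dualIntegrand, hb0, zero_mul, sub_zero]; positivity
  · have : exp (-n) ≤ 1 := exp_le_one_iff.2 (by simp)
    simp only [dualIntegrand, ha0]
    nlinarith
  · refine dualIntegrand_nonneg (ha.lt_of_ne' ha0) (hb.lt_of_ne' hb0) ?_
    rcases le_total 0 (log (a / b)) with h | h
    · have : 0 ≤ min (n : ℝ) (log (a / b)) := le_min n.cast_nonneg h
      rw [max_eq_right (by linarith)]
      exact mul_nonneg this (sub_nonneg.2 (min_le_right _ _))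
    · have : max (-n : ℝ) (log (a / b)) ≤ 0 := max_le (by simp) h
      rw [min_eq_right (by linarith [n.cast_nonneg (α := ℝ)])]
      exact mul_nonneg_of_nonpos_of_nonpos this (sub_nonpos.2 (le_max_right _ _))

theorem tendsto_ofReal_dualIntegrand_truncLogRatio (ha : 0 ≤ a) (hb : 0 ≤ b) :
    Tendsto (fun n : ℕ ↦ ENNReal.ofReal (dualIntegrand (truncLogRatio n a b) a b)) atTop
      (𝓝 (sCostE a b)) := by
  rcases hb.eq_or_lt with rfl | hb
  · rcases ha.eq_or_lt with rfl | ha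
    · simp [truncLogRatio, dualIntegrand, sCostE]
    · simp only [truncLogRatio, dualIntegrand, sCostE, if_true, if_neg ha.ne', zero_mul, sub_zero]
      exact ENNReal.tendsto_ofReal_atTop.comp
        (tendsto_natCast_atTop_atTop.atTop_mul_const ha)
  · rcases ha.eq_or_lt with rfl | ha
    · simp only [truncLogRatio, dualIntegrand, sCostE, if_neg hb.ne', if_true, mul_zero,
        zero_div, log_zero, zero_sub]
      refine ENNReal.tendsto_ofReal ?_
      have := (tendsto_exp_neg_atTop_nhds_zero.comp tendsto_natCast_atTop_atTop).sub_const 1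
        |>.const_mul b |>.neg
      simpa using this
    · simp only [truncLogRatio, sCostE, if_neg hb.ne', if_neg ha.ne']
      refine tendsto_const_nhds.congr' ?_
      filter_upwards [tendsto_natCast_atTop_atTop.eventually_ge_atTop |log (a / b)|] with n hn
      rw [min_eq_right ((le_abs_self _).trans hn),
        max_eq_right (neg_le.1 ((neg_le_abs _).trans hn)), dualIntegrand_log_div ha hb]

end TruncLogRatio

theorem measurable_sCostE : Measurable fun p : ℝ × ℝ ↦ sCostE p.1 p.2 :=
  .ite (measurable_snd (measurableSet_singleton 0))
    (.ite (measurable_fst (measurableSet_singleton 0)) measurable_const measurable_const)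
    (by fun_prop)

theorem ofReal_integral_le_lintegral_ofReal {α : Type*} [MeasurableSpace α] {μ : Measure α}
    {f : α → ℝ} (hf : Integrable f μ) :
    ENNReal.ofReal (∫ x, f x ∂μ) ≤ ∫⁻ x, ENNReal.ofReal (f x) ∂μ := by
  refine (ENNReal.ofReal_le_ofReal ?_).trans ENNReal.ofReal_toReal_le
  rw [integral_eq_lintegral_pos_part_sub_lintegral_neg_part hf]
  exact sub_le_self _ ENNReal.toReal_nonneg

section Integral

variable {α : Type*} [MeasurableSpace α] {μ : Measure α} {u j : α → ℝ}

theorem integrable_dualIntegrand (hu : Integrable u μ) (hj : Integrable j μ) {φ : α → ℝ}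
    (hφ : AEStronglyMeasurable φ μ) {C : ℝ} (hC : ∀ᵐ x ∂μ, |φ x| ≤ C) :
    Integrable (fun x ↦ dualIntegrand (φ x) (j x) (u x)) μ := by
  refine ((hj.abs.const_mul C).add (hu.abs.const_mul (exp C + 1))).mono' ?_ ?_
  · unfold dualIntegrand; fun_prop
  · filter_upwards [hC] with x hx using abs_dualIntegrand_le hx

theorem ofReal_integral_dualIntegrand_le_lintegral_sCostE (hu : Integrable u μ)
    (hj : Integrable j μ) (hu0 : 0 ≤ᵐ[μ] u) (hj0 : 0 ≤ᵐ[μ] j) {φ : α → ℝ}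
    (hφ : AEStronglyMeasurable φ μ) {C : ℝ} (hC : ∀ᵐ x ∂μ, |φ x| ≤ C) :
    ENNReal.ofReal (∫ x, dualIntegrand (φ x) (j x) (u x) ∂μ) ≤ ∫⁻ x, sCostE (j x) (u x) ∂μ :=
  (ofReal_integral_le_lintegral_ofReal (integrable_dualIntegrand hu hj hφ hC)).trans <|
    lintegral_mono_ae <| by
      filter_upwards [hu0, hj0] with x hux hjx using ofReal_dualIntegrand_le_sCostE hjx hux

theorem integral_dualIntegrand_le_lintegral_sCostE (hu : Integrable u μ)
    (hj : Integrable j μ) (hu0 : 0 ≤ᵐ[μ] u) (hj0 : 0 ≤ᵐ[μ] j) {φ : α → ℝ}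
    (hφ : AEStronglyMeasurable φ μ) {C : ℝ} (hC : ∀ᵐ x ∂μ, |φ x| ≤ C) :
    ((∫ x, dualIntegrand (φ x) (j x) (u x) ∂μ : ℝ) : EReal) ≤
      ((∫⁻ x, sCostE (j x) (u x) ∂μ : ℝ≥0∞) : EReal) :=
  calc _ ≤ ((ENNReal.ofReal (∫ x, dualIntegrand (φ x) (j x) (u x) ∂μ) : ℝ≥0∞) : EReal) := by
        rw [EReal.coe_ennreal_ofReal]; exact EReal.coe_le_coe_iff.2 (le_max_left _ _)
    _ ≤ _ := EReal.coe_ennreal_le_coe_ennreal_iff.2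
        (ofReal_integral_dualIntegrand_le_lintegral_sCostE hu hj hu0 hj0 hφ hC)

theorem aestronglyMeasurable_truncLogRatio (hu : AEMeasurable u μ) (hj : AEMeasurable j μ)
    (n : ℕ) : AEStronglyMeasurable (fun x ↦ truncLogRatio n (j x) (u x)) μ :=
  ((measurable_truncLogRatio n).comp_aemeasurable (hj.prodMk hu)).aestronglyMeasurable

theorem tendsto_ofReal_integral_dualIntegrand_truncLogRatio (hu : Integrable u μ)
    (hj : Integrable j μ) (hu0 : 0 ≤ᵐ[μ] u) (hj0 : 0 ≤ᵐ[μ] j) :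
    Tendsto (fun n : ℕ ↦ ENNReal.ofReal
        (∫ x, dualIntegrand (truncLogRatio n (j x) (u x)) (j x) (u x) ∂μ)) atTop
      (𝓝 (∫⁻ x, sCostE (j x) (u x) ∂μ)) := by
  have hφ := aestronglyMeasurable_truncLogRatio hu.aemeasurable hj.aemeasurable (μ := μ)
  have hφC (n : ℕ) : ∀ᵐ x ∂μ, |truncLogRatio n (j x) (u x)| ≤ n :=
    .of_forall fun x ↦ abs_truncLogRatio_le n (j x) (u x)
  have hint (n : ℕ) := integrable_dualIntegrand hu hj (hφ n) (hφC n)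
  have hlim : ∫⁻ x, sCostE (j x) (u x) ∂μ ≤ atTop.liminf fun n : ℕ ↦
      ENNReal.ofReal (∫ x, dualIntegrand (truncLogRatio n (j x) (u x)) (j x) (u x) ∂μ) := by
    calc ∫⁻ x, sCostE (j x) (u x) ∂μ
        = ∫⁻ x, atTop.liminf fun n : ℕ ↦
            ENNReal.ofReal (dualIntegrand (truncLogRatio n (j x) (u x)) (j x) (u x)) ∂μ := by
          refine lintegral_congr_ae ?_
          filter_upwards [hu0, hj0] with x hux hjx
          exact (tendsto_ofReal_dualIntegrand_truncLogRatio hjx hux).liminf_eq.symm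
      _ ≤ _ := lintegral_liminf_le' fun n ↦ (hint n).1.aemeasurable.ennreal_ofReal
      _ = _ := by
          congr with n
          refine (ofReal_integral_eq_lintegral_ofReal (hint n) ?_).symm
          filter_upwards [hu0, hj0] with x hux hjx
          exact dualIntegrand_truncLogRatio_nonneg n hjx hux
  exact tendsto_of_le_liminf_of_limsup_le hlim (limsup_le_of_le (by isBoundedDefault)
    (.of_forall fun n ↦
      ofReal_integral_dualIntegrand_le_lintegral_sCostE hu hj hu0 hj0 (hφ n) (hφC n)))

theorem lintegral_sCostE_le_of_forall_bounded (hu : Integrable u μ) (hj : Integrable j μ)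
    (hu0 : 0 ≤ᵐ[μ] u) (hj0 : 0 ≤ᵐ[μ] j) {M : EReal}
    (hM : ∀ φ : α → ℝ, AEStronglyMeasurable φ μ → ∀ C : ℝ, 0 ≤ C → (∀ᵐ x ∂μ, |φ x| ≤ C) →
      ((∫ x, dualIntegrand (φ x) (j x) (u x) ∂μ : ℝ) : EReal) ≤ M) :
    ((∫⁻ x, sCostE (j x) (u x) ∂μ : ℝ≥0∞) : EReal) ≤ M := by
  refine le_of_tendsto' ((continuous_coe_ennreal_ereal.tendsto _).comp
    (tendsto_ofReal_integral_dualIntegrand_truncLogRatio hu hj hu0 hj0)) fun n ↦ ?_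
  have hnonneg : 0 ≤ ∫ x, dualIntegrand (truncLogRatio n (j x) (u x)) (j x) (u x) ∂μ :=
    integral_nonneg_of_ae <| by
      filter_upwards [hu0, hj0] with x hux hjx using dualIntegrand_truncLogRatio_nonneg n hjx hux
  rw [Function.comp_apply, EReal.coe_ennreal_ofReal, max_eq_left hnonneg]
  exact hM _ (aestronglyMeasurable_truncLogRatio hu.aemeasurable hj.aemeasurable n) n
    n.cast_nonneg (.of_forall fun x ↦ abs_truncLogRatio_le n (j x) (u x))

theorem lintegral_sCostE_eq_top (hu : AEMeasurable u μ) (hj : AEMeasurable j μ)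
    (h : ¬ ∀ᵐ x ∂μ, u x = 0 → j x = 0) : ∫⁻ x, sCostE (j x) (u x) ∂μ = ⊤ := by
  refine lintegral_eq_top_of_measure_eq_top_ne_zero
    (measurable_sCostE.comp_aemeasurable (hj.prodMk hu)) ?_
  refine fun h0 ↦ h (measure_mono_null (fun x hx ↦ ?_) h0)
  obtain ⟨hux, hjx⟩ := Classical.not_imp.1 hx
  simp [sCostE, hux, hjx]

end Integral

section Approximation

variable {X : Type*} [TopologicalSpace X] [NormalSpace X] [MeasurableSpace X] [BorelSpace X]
  {μ : Measure X} [IsFiniteMeasure μ] [μ.WeaklyRegular]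

/-- A Lusin-type approximation: clamp `L¹`-approximants to `[-C, C]`, then pass to an a.e.
convergent subsequence. -/
theorem exists_seq_continuous_tendsto_ae_s9 {φ : X → ℝ} (hφ : AEStronglyMeasurable φ μ) {C : ℝ}
    (hC0 : 0 ≤ C) (hC : ∀ᵐ x ∂μ, |φ x| ≤ C) :
    ∃ ζ : ℕ → X → ℝ, (∀ k, Continuous (ζ k)) ∧ (∀ k x, |ζ k x| ≤ C) ∧
      ∀ᵐ x ∂μ, Tendsto (fun k ↦ ζ k x) atTop (𝓝 (φ x)) := by
  have hCC : -C ≤ C := by linarith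
  have hφ1 : MemLp φ 1 μ := .of_bound hφ C (by simpa only [Real.norm_eq_abs] using hC)
  choose g hg _ using fun k : ℕ ↦ hφ1.exists_boundedContinuous_eLpNorm_sub_le ENNReal.one_ne_top
    (ENNReal.inv_ne_zero.2 (ENNReal.natCast_ne_top k))
  let ζ : ℕ → X → ℝ := fun k x ↦ projIcc (-C) C hCC (g k x)
  have hζ : ∀ k, Continuous (ζ k) := fun k ↦
    continuous_subtype_val.comp (continuous_projIcc.comp (g k).continuous)
  have hdist (k : ℕ) : eLpNorm (ζ k - φ) 1 μ ≤ (k : ℝ≥0∞)⁻¹ := by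
    refine le_trans (eLpNorm_mono_ae ?_) (hg k)
    filter_upwards [hC] with x hx
    simp only [Pi.sub_apply, Real.norm_eq_abs]
    have hφx : (projIcc (-C) C hCC (φ x) : ℝ) = φ x := by rw [projIcc_of_mem hCC (abs_le.1 hx)]
    simpa only [hφx, abs_sub_comm (φ x)] using abs_projIcc_sub_projIcc hCC (c := g k x) (d := φ x)
  have hmeas : TendstoInMeasure μ ζ atTop φ :=
    tendstoInMeasure_of_tendsto_eLpNorm one_ne_zero (fun k ↦ (hζ k).aestronglyMeasurable) hφ
      (tendsto_of_tendsto_of_tendsto_of_le_of_le tendsto_const_nhds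
        ENNReal.tendsto_inv_nat_nhds_zero (fun _ ↦ bot_le) hdist)
  obtain ⟨ns, -, hns⟩ := hmeas.exists_seq_tendsto_ae
  exact ⟨fun k ↦ ζ (ns k), fun k ↦ hζ (ns k),
    fun k x ↦ abs_le.2 (projIcc (-C) C hCC (g (ns k) x)).2, hns⟩

theorem exists_seq_continuous_tendsto_integral_dualIntegrand {u j : X → ℝ}
    (hu : Integrable u μ) (hj : Integrable j μ) {φ : X → ℝ} (hφ : AEStronglyMeasurable φ μ)
    {C : ℝ} (hC0 : 0 ≤ C) (hC : ∀ᵐ x ∂μ, |φ x| ≤ C) :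
    ∃ ζ : ℕ → X → ℝ, (∀ k, Continuous (ζ k)) ∧
      Tendsto (fun k ↦ ∫ x, dualIntegrand (ζ k x) (j x) (u x) ∂μ) atTop
        (𝓝 (∫ x, dualIntegrand (φ x) (j x) (u x) ∂μ)) := by
  obtain ⟨ζ, hζ, hζC, hlim⟩ := exists_seq_continuous_tendsto_ae_s9 hφ hC0 hC
  refine ⟨ζ, hζ, tendsto_integral_of_dominated_convergence _
    (fun k ↦ (integrable_dualIntegrand hu hj (hζ k).aestronglyMeasurable
      (.of_forall (hζC k))).1)
    ((hj.abs.const_mul C).add (hu.abs.const_mul (exp C + 1)))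
    (fun k ↦ .of_forall fun x ↦ abs_dualIntegrand_le (hζC k x)) ?_⟩
  filter_upwards [hlim] with x hx
  exact ((continuous_dualIntegrand _ _).tendsto _).comp hx

end Approximation

theorem entropic_dual_L1_general (T : ℝ) (u j : ℝ → ℝ)
    (hu : IntegrableOn u (Icc 0 T)) (hj : IntegrableOn j (Icc 0 T))
    (hu0 : ∀ t ∈ Icc (0:ℝ) T, 0 ≤ u t) (hj0 : ∀ t ∈ Icc (0:ℝ) T, 0 ≤ j t) :
    (⨆ ζ : {f : ℝ → ℝ // ContinuousOn f (Icc 0 T)},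
        (((∫ t in Icc (0:ℝ) T, (ζ.1 t * j t - u t * (Real.exp (ζ.1 t) - 1)) : ℝ)) : EReal))
      = ((∫⁻ t in Icc (0:ℝ) T, sCostE (j t) (u t)) : ℝ≥0∞) ∧
    (¬ (∀ᵐ t ∂(volume.restrict (Icc (0:ℝ) T)), u t = 0 → j t = 0) →
      (⨆ ζ : {f : ℝ → ℝ // ContinuousOn f (Icc 0 T)},
        (((∫ t in Icc (0:ℝ) T, (ζ.1 t * j t - u t * (Real.exp (ζ.1 t) - 1)) : ℝ)) : EReal)) = ⊤) := by
  have hu0ae : 0 ≤ᵐ[volume.restrict (Icc 0 T)] u := ae_restrict_of_forall_mem measurableSet_Icc hu0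
  have hj0ae : 0 ≤ᵐ[volume.restrict (Icc 0 T)] j := ae_restrict_of_forall_mem measurableSet_Icc hj0
  have hdual : (⨆ ζ : {f : ℝ → ℝ // ContinuousOn f (Icc 0 T)},
        (((∫ t in Icc (0:ℝ) T, dualIntegrand (ζ.1 t) (j t) (u t) : ℝ)) : EReal))
      = ((∫⁻ t in Icc (0:ℝ) T, sCostE (j t) (u t)) : ℝ≥0∞) := by
    refine le_antisymm (iSup_le fun ζ ↦ ?_)
      (lintegral_sCostE_le_of_forall_bounded hu hj hu0ae hj0ae ?_)
    · obtain ⟨C, hC⟩ := isCompact_Icc.exists_bound_of_continuousOn ζ.2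
      exact integral_dualIntegrand_le_lintegral_sCostE hu hj hu0ae hj0ae
        (ζ.2.aestronglyMeasurable measurableSet_Icc)
        (ae_restrict_of_forall_mem measurableSet_Icc hC)
    · intro φ hφ C hC0 hC
      obtain ⟨ζ, hζ, hlim⟩ := exists_seq_continuous_tendsto_integral_dualIntegrand hu hj hφ hC0 hC
      exact le_of_tendsto' (EReal.tendsto_coe.2 hlim) fun k ↦
        le_iSup_of_le ⟨ζ k, (hζ k).continuousOn⟩ le_rfl
  refine ⟨hdual, fun h ↦ hdual.trans ?_⟩
  rw [lintegral_sCostE_eq_top hu.aemeasurable hj.aemeasurable h, EReal.coe_ennreal_top]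

/-- Dual formulation of the entropic cost for `L¹` densities: the supremum (in `[0,∞]`,
here realised inside `EReal`) over continuous `ζ` of `∫₀ᵀ (ζ j − u (e^ζ − 1)) dt` equals
`∫₀ᵀ s(j(t)∣u(t)) dt`; in particular the supremum is infinite unless `j(t) = 0` for
almost every `t` with `u(t) = 0`. -/
theorem entropic_dual_L1 (T : ℝ) (hT : 0 < T) (u j : ℝ → ℝ)
    (hu : IntegrableOn u (Icc 0 T)) (hj : IntegrableOn j (Icc 0 T))
    (hu0 : ∀ t ∈ Icc (0:ℝ) T, 0 ≤ u t) (hj0 : ∀ t ∈ Icc (0:ℝ) T, 0 ≤ j t) :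
    (⨆ ζ : {f : ℝ → ℝ // ContinuousOn f (Icc 0 T)},
        (((∫ t in Icc (0:ℝ) T, (ζ.1 t * j t - u t * (Real.exp (ζ.1 t) - 1)) : ℝ)) : EReal))
      = ((∫⁻ t in Icc (0:ℝ) T, sCostE (j t) (u t)) : ℝ≥0∞) ∧
    (¬ (∀ᵐ t ∂(volume.restrict (Icc (0:ℝ) T)), u t = 0 → j t = 0) →
      (⨆ ζ : {f : ℝ → ℝ // ContinuousOn f (Icc 0 T)},
        (((∫ t in Icc (0:ℝ) T, (ζ.1 t * j t - u t * (Real.exp (ζ.1 t) - 1)) : ℝ)) : EReal)) = ⊤) :=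
  entropic_dual_L1_general T u j hu hj hu0 hj0
end

section
/- Let T > 0 and let a, b be finite nonnegative Borel measures on [0,T] with a absolutely continuous with respect to b and ∫_{[0,T]} s( (da/db)(t) ∣ 1 ) b(dt) < ∞. For δ > 0 set b_δ := b + δ·λ, where λ is Lebesgue measure on [0,T]. Then a is absolutely continuous with respect to b_δ for every δ > 0, and lim_{δ→0} ∫_{[0,T]} s( (da/db_δ)(t) ∣ 1 ) b_δ(dt) = ∫_{[0,T]} s( (da/db)(t) ∣ 1 ) b(dt). -/
/-!
Take densities with respect to the common dominating measure `μ = b + λ`, say `α = da/dμ`,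
`β = db/dμ`, `ℓ = dλ/dμ`. Then `da/db_δ = α / (β + δ ℓ)`, so the cost of `b_δ` is
`∫ s(α ∣ β + δ ℓ) dμ`, and that of `b` is `∫ s(α ∣ β) dμ`. Pointwise, `q ↦ s(x ∣ q)` is continuous
(at `q = 0` only `x = 0` occurs, as `a ≪ b`), and since `∂_q s(x ∣ q) ≤ 1` we have
`s(α ∣ β + δ ℓ) ≤ s(α ∣ β) + ℓ` for `δ ≤ 1`, which is `μ`-integrable because `λ` is finite.
Dominated convergence concludes.
-/

open MeasureTheory Set Filter
open scoped ENNReal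

open scoped Topology

@[fun_prop]
lemma continuous_sOne : Continuous sOne :=
  (Real.continuous_mul_log.sub continuous_id).add continuous_const

/-- `q · s(x/q ∣ 1)`, which is the Boltzmann cost `s(x ∣ q)` for `q > 0`; at `q = 0` it takes the
junk value `0` instead of `s(x ∣ 0)`. -/
noncomputable def boltzmannCost (x q : ℝ) : ℝ := q * sOne (x / q)

@[simp]
lemma boltzmannCost_zero_left (q : ℝ) : boltzmannCost 0 q = q := by
  simp [boltzmannCost, sOne]

lemma boltzmannCost_of_pos (x : ℝ) {q : ℝ} (hq : 0 < q) :
    boltzmannCost x q = x * Real.log (x / q) - x + q := by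
  unfold boltzmannCost sOne
  field_simp

lemma boltzmannCost_add_le {x q d : ℝ} (hx : 0 ≤ x) (hq : 0 ≤ q) (hd : 0 ≤ d)
    (hxq : q = 0 → x = 0) : boltzmannCost x (q + d) ≤ boltzmannCost x q + d := by
  rcases hq.eq_or_lt with rfl | hq
  · simp [hxq rfl]
  rw [boltzmannCost_of_pos x hq, boltzmannCost_of_pos x (by positivity)]
  have hlog : x * Real.log (x / (q + d)) ≤ x * Real.log (x / q) := by
    rcases hx.eq_or_lt with rfl | hx
    · simp
    · gcongr
      linarith
  linarith

lemma continuousAt_boltzmannCost (x : ℝ) {q : ℝ} (hq : q ≠ 0) :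
    ContinuousAt (boltzmannCost x) q :=
  continuousAt_id.mul
    (continuous_sOne.continuousAt.comp (continuousAt_const.div continuousAt_id hq))

lemma tendsto_boltzmannCost_add_mul {x q : ℝ} (L : ℝ) (hxq : q = 0 → x = 0) :
    Tendsto (fun δ => boltzmannCost x (q + δ * L)) (𝓝 0) (𝓝 (boltzmannCost x q)) := by
  have hshift : Tendsto (fun δ : ℝ => q + δ * L) (𝓝 0) (𝓝 q) :=
    (by fun_prop : Continuous fun δ : ℝ => q + δ * L).tendsto' 0 q (by simp)
  by_cases hq : q = 0
  · simpa [hxq hq] using hshift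
  · exact (continuousAt_boltzmannCost x hq).tendsto.comp hshift

lemma mul_ofReal_sOne_toReal_div (x : ℝ≥0∞) {q : ℝ≥0∞} (hq : q ≠ ∞) :
    q * ENNReal.ofReal (sOne (x / q).toReal) =
      ENNReal.ofReal (boltzmannCost x.toReal q.toReal) := by
  rw [boltzmannCost, ENNReal.ofReal_mul ENNReal.toReal_nonneg, ENNReal.ofReal_toReal hq,
    ENNReal.toReal_div]

section EntropicCost

variable {α : Type*} [MeasurableSpace α]

noncomputable def entropicCost (a ν : Measure α) : ℝ≥0∞ :=
  ∫⁻ t, ENNReal.ofReal (sOne (a.rnDeriv ν t).toReal) ∂ν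

lemma entropicCost_eq_lintegral_boltzmannCost {a ν μ : Measure α}
    [SigmaFinite a] [SigmaFinite ν] [SigmaFinite μ] (ha : a ≪ μ) (hν : ν ≪ μ) :
    entropicCost a ν =
      ∫⁻ t, ENNReal.ofReal (boltzmannCost (a.rnDeriv μ t).toReal (ν.rnDeriv μ t).toReal) ∂μ :=
  calc entropicCost a ν
      = ∫⁻ t, ENNReal.ofReal (sOne (a.rnDeriv μ t / ν.rnDeriv μ t).toReal) ∂ν :=
        lintegral_congr_ae <| by
          filter_upwards [Measure.rnDeriv_eq_div ha hν] with t ht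
          rw [ht]
    _ = ∫⁻ t, ν.rnDeriv μ t *
          ENNReal.ofReal (sOne (a.rnDeriv μ t / ν.rnDeriv μ t).toReal) ∂μ :=
        (lintegral_rnDeriv_mul hν (by fun_prop)).symm
    _ = _ := lintegral_congr_ae <| by
          filter_upwards [Measure.rnDeriv_lt_top ν μ] with t ht
          exact mul_ofReal_sOne_toReal_div _ ht.ne

lemma ae_toReal_rnDeriv_eq_zero_of_absolutelyContinuous {a ν μ : Measure α}
    [SigmaFinite a] [SigmaFinite ν] [SigmaFinite μ] (hab : a ≪ ν) :
    ∀ᵐ t ∂μ, (ν.rnDeriv μ t).toReal = 0 → (a.rnDeriv μ t).toReal = 0 := by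
  filter_upwards [Measure.rnDeriv_mul_rnDeriv (κ := μ) hab] with t ht hν
  rw [← ht, Pi.mul_apply, ENNReal.toReal_mul, hν, mul_zero]

lemma entropicCost_add_smul_eq_lintegral {a ν ρ : Measure α}
    [SigmaFinite a] [SigmaFinite ν] [IsFiniteMeasure ρ] (hab : a ≪ ν) {δ : ℝ} (hδ : 0 ≤ δ) :
    entropicCost a (ν + ENNReal.ofReal δ • ρ) =
      ∫⁻ t, ENNReal.ofReal (boltzmannCost (a.rnDeriv (ν + ρ) t).toReal
        ((ν.rnDeriv (ν + ρ) t).toReal + δ * (ρ.rnDeriv (ν + ρ) t).toReal)) ∂(ν + ρ) := by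
  have := ρ.smul_finite (ENNReal.ofReal_ne_top (r := δ))
  have hν : ν ≪ ν + ρ := Measure.AbsolutelyContinuous.rfl.add_right ρ
  have hρ : ρ ≪ ν + ρ := Measure.AbsolutelyContinuous.rfl.add_right' ν
  rw [entropicCost_eq_lintegral_boltzmannCost (hab.trans hν)
    (hν.add_left (Measure.smul_absolutelyContinuous.trans hρ))]
  refine lintegral_congr_ae ?_
  filter_upwards [Measure.rnDeriv_add' ν (ENNReal.ofReal δ • ρ) (ν + ρ),
    Measure.rnDeriv_smul_left_of_ne_top' ρ (ν + ρ) ENNReal.ofReal_ne_top,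
    Measure.rnDeriv_lt_top ν (ν + ρ), Measure.rnDeriv_lt_top ρ (ν + ρ)]
    with t hadd hsmul hνt hρt
  rw [hadd, Pi.add_apply, hsmul, Pi.smul_apply, smul_eq_mul,
    ENNReal.toReal_add hνt.ne (ENNReal.mul_ne_top ENNReal.ofReal_ne_top hρt.ne),
    ENNReal.toReal_mul, ENNReal.toReal_ofReal hδ]

theorem tendsto_entropicCost_add_smul {a ν ρ : Measure α} [SigmaFinite a] [SigmaFinite ν]
    [IsFiniteMeasure ρ] (hab : a ≪ ν) (hfin : entropicCost a ν ≠ ∞) :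
    Tendsto (fun δ : ℝ => entropicCost a (ν + ENNReal.ofReal δ • ρ)) (𝓝[>] 0)
      (𝓝 (entropicCost a ν)) := by
  set μ := ν + ρ
  set A := fun t => (a.rnDeriv μ t).toReal
  set B := fun t => (ν.rnDeriv μ t).toReal
  set L := fun t => (ρ.rnDeriv μ t).toReal
  have hν : ν ≪ μ := Measure.AbsolutelyContinuous.rfl.add_right ρ
  have hzero : ∀ᵐ t ∂μ, B t = 0 → A t = 0 :=
    ae_toReal_rnDeriv_eq_zero_of_absolutelyContinuous hab
  have hmeas (δ : ℝ) :
      Measurable fun t => ENNReal.ofReal (boltzmannCost (A t) (B t + δ * L t)) := by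
    unfold boltzmannCost
    fun_prop
  rw [entropicCost_eq_lintegral_boltzmannCost (hab.trans hν) hν] at hfin ⊢
  refine Tendsto.congr' (eventually_nhdsWithin_of_forall fun δ hδ =>
    (entropicCost_add_smul_eq_lintegral hab (le_of_lt hδ)).symm) ?_
  refine tendsto_lintegral_filter_of_dominated_convergence
    (fun t => ENNReal.ofReal (boltzmannCost (A t) (B t)) + ρ.rnDeriv μ t)
    (Eventually.of_forall hmeas) ?_ ?_ ?_
  · filter_upwards [Ioc_mem_nhdsGT zero_lt_one] with δ hδ
    filter_upwards [hzero] with t ht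
    have hδL : δ * L t ≤ L t := mul_le_of_le_one_left ENNReal.toReal_nonneg hδ.2
    calc ENNReal.ofReal (boltzmannCost (A t) (B t + δ * L t))
        ≤ ENNReal.ofReal (boltzmannCost (A t) (B t) + L t) :=
          ENNReal.ofReal_le_ofReal <| (boltzmannCost_add_le ENNReal.toReal_nonneg
            ENNReal.toReal_nonneg (mul_nonneg hδ.1.le ENNReal.toReal_nonneg) ht).trans
            (by linarith)
      _ ≤ ENNReal.ofReal (boltzmannCost (A t) (B t)) + ρ.rnDeriv μ t :=
          ENNReal.ofReal_add_le.trans (by gcongr; exact ENNReal.ofReal_toReal_le)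
  · rw [lintegral_add_left (by simpa using hmeas 0),
      Measure.lintegral_rnDeriv (Measure.AbsolutelyContinuous.rfl.add_right' ν)]
    exact ENNReal.add_ne_top.2 ⟨hfin, measure_ne_top ρ univ⟩
  · filter_upwards [hzero] with t ht
    exact (ENNReal.continuous_ofReal.tendsto _).comp
      ((tendsto_boltzmannCost_add_mul (L t) ht).mono_left nhdsWithin_le_nhds)

end EntropicCost

theorem entropic_cost_approx_delta_general (T : ℝ) (a b : Measure ℝ)
    [IsFiniteMeasure a] [IsFiniteMeasure b]
    (hab : a ≪ b)
    (hfin : (∫⁻ t, ENNReal.ofReal (sOne ((a.rnDeriv b t).toReal)) ∂b) ≠ ⊤) :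
    (∀ δ : ℝ, 0 < δ →
      a ≪ (b + ENNReal.ofReal δ • (volume.restrict (Set.Icc (0:ℝ) T)))) ∧
    Tendsto
      (fun δ : ℝ =>
        ∫⁻ t, ENNReal.ofReal (sOne
            ((a.rnDeriv (b + ENNReal.ofReal δ • (volume.restrict (Set.Icc (0:ℝ) T))) t).toReal))
          ∂(b + ENNReal.ofReal δ • (volume.restrict (Set.Icc (0:ℝ) T))))
      (nhdsWithin 0 (Set.Ioi 0))
      (nhds (∫⁻ t, ENNReal.ofReal (sOne ((a.rnDeriv b t).toReal)) ∂b)) :=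
  ⟨fun _ _ => hab.add_right _, tendsto_entropicCost_add_smul hab hfin⟩

/-- Let `a, b` be finite nonnegative Borel measures supported in `[0,T]` with `a ≪ b`
and `∫ s(da/db∣1) db < ∞`. Setting `b_δ := b + δ·λ` (with `λ` Lebesgue measure on
`[0,T]`), one has `a ≪ b_δ` for every `δ > 0` and
`∫ s(da/db_δ∣1) db_δ → ∫ s(da/db∣1) db` as `δ ↓ 0`. -/
theorem entropic_cost_approx_delta (T : ℝ) (hT : 0 < T) (a b : Measure ℝ)
    [IsFiniteMeasure a] [IsFiniteMeasure b]
    (ha : a (Set.Icc (0:ℝ) T)ᶜ = 0) (hb : b (Set.Icc (0:ℝ) T)ᶜ = 0)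
    (hab : a ≪ b)
    (hfin : (∫⁻ t, ENNReal.ofReal (sOne ((a.rnDeriv b t).toReal)) ∂b) ≠ ⊤) :
    (∀ δ : ℝ, 0 < δ →
      a ≪ (b + ENNReal.ofReal δ • (volume.restrict (Set.Icc (0:ℝ) T)))) ∧
    Tendsto
      (fun δ : ℝ =>
        ∫⁻ t, ENNReal.ofReal (sOne
            ((a.rnDeriv (b + ENNReal.ofReal δ • (volume.restrict (Set.Icc (0:ℝ) T))) t).toReal))
          ∂(b + ENNReal.ofReal δ • (volume.restrict (Set.Icc (0:ℝ) T))))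
      (nhdsWithin 0 (Set.Ioi 0))
      (nhds (∫⁻ t, ENNReal.ofReal (sOne ((a.rnDeriv b t).toReal)) ∂b)) :=
  entropic_cost_approx_delta_general T a b hab hfin
end

section
/- Let T > 0 and let (f_n)_{n≥1} be a sequence of continuous real-valued functions on [0,T] such that (i) sup_{n≥1} ‖f_n‖_∞ < ∞, and (ii) there exists a non-decreasing function ω : [0,∞) → [0,∞) with lim_{σ↓0} ω(σ) = 0 such that for every σ > 0 one has limsup_{n→∞} sup_{|t−s|<σ} |f_n(t) − f_n(s)| ≤ ω(σ). Then there exists a subsequence (f_{n_k}) that converges uniformly on [0,T]. -/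
/-!
Asymptotic equicontinuity upgrades to genuine uniform equicontinuity: for a given tolerance it
holds from some index `N` on with a common `δ`, and the finitely many functions before `N` are
each uniformly continuous on the compact interval, so they only shrink `δ` finitely many times.
The classical Arzelà–Ascoli theorem then applies.
-/

open Filter Set Uniformity

theorem UniformEquicontinuous.of_eventually {α β : Type*} [UniformSpace α] [UniformSpace β]
    {F : ℕ → α → β} (hF : ∀ n, UniformContinuous (F n))
    (h : ∀ U ∈ 𝓤 β, ∃ N, ∀ᶠ xy in 𝓤 α, ∀ n ≥ N, (F n xy.1, F n xy.2) ∈ U) :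
    UniformEquicontinuous F := by
  intro U hU
  obtain ⟨N, hN⟩ := h U hU
  have hinit : ∀ᶠ xy in 𝓤 α, ∀ n ∈ Iio N, (F n xy.1, F n xy.2) ∈ U :=
    (eventually_all_finite (finite_Iio N)).2 fun n _ => hF n hU
  filter_upwards [hN, hinit] with xy htail hhead n
  rcases lt_or_ge n N with hn | hn
  · exact hhead n hn
  · exact htail n hn

theorem exists_strictMono_tendstoUniformly_of_equicontinuous {α β : Type*} [TopologicalSpace α]
    [CompactSpace α] [MetricSpace β] {s : Set β} (hs : IsCompact s) {F : ℕ → α → β}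
    (hcont : ∀ n, Continuous (F n)) (hmem : ∀ n x, F n x ∈ s) (hF : Equicontinuous F) :
    ∃ φ : ℕ → ℕ, StrictMono φ ∧ ∃ g : α → β, TendstoUniformly (fun k => F (φ k)) g atTop := by
  let G : ℕ → BoundedContinuousFunction α β := fun n =>
    BoundedContinuousFunction.mkOfCompact ⟨F n, hcont n⟩
  have hG : Equicontinuous ((↑) : range G → α → β) := fun x U hU =>
    (hF x U hU).mono fun _ hy ⟨_, n, hn⟩ => hn ▸ hy n
  have hcomp : IsCompact (closure (range G)) :=
    BoundedContinuousFunction.arzela_ascoli s hs _ (by rintro _ x ⟨n, rfl⟩; exact hmem n x) hG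
  obtain ⟨g, -, φ, hφ, hconv⟩ :=
    hcomp.tendsto_subseq fun n => subset_closure (mem_range_self n)
  exact ⟨φ, hφ, g, BoundedContinuousFunction.tendsto_iff_tendstoUniformly.1 hconv⟩

/-- The modulus of continuity of `g` on `s` at scale `σ` (junk value `0` when `s` is empty). -/
noncomputable def uniformOscillation (s : Set ℝ) (g : ℝ → ℝ) (σ : ℝ) : ℝ :=
  sSup {d : ℝ | ∃ t ∈ s, ∃ u ∈ s, |t - u| < σ ∧ d = |g t - g u|}

section uniformOscillation

variable {s : Set ℝ} {g : ℝ → ℝ} {M σ : ℝ}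

theorem abs_sub_le_two_mul_of_abs_le (hg : ∀ t ∈ s, |g t| ≤ M) {t u : ℝ} (ht : t ∈ s)
    (hu : u ∈ s) : |g t - g u| ≤ 2 * M :=
  calc |g t - g u| ≤ |g t| + |g u| := abs_sub _ _
    _ ≤ 2 * M := by linarith [hg t ht, hg u hu]

theorem abs_sub_le_uniformOscillation (hg : ∀ t ∈ s, |g t| ≤ M) {t u : ℝ} (ht : t ∈ s)
    (hu : u ∈ s) (htu : |t - u| < σ) : |g t - g u| ≤ uniformOscillation s g σ :=
  le_csSup ⟨2 * M, by rintro _ ⟨t, ht, u, hu, -, rfl⟩; exact abs_sub_le_two_mul_of_abs_le hg ht hu⟩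
    ⟨t, ht, u, hu, htu, rfl⟩

theorem uniformOscillation_le (hg : ∀ t ∈ s, |g t| ≤ M) : uniformOscillation s g σ ≤ 2 * |M| :=
  Real.sSup_le (by
    rintro _ ⟨t, ht, u, hu, -, rfl⟩
    linarith [abs_sub_le_two_mul_of_abs_le hg ht hu, le_abs_self M]) (by positivity)

theorem eventually_abs_sub_lt_of_limsup_uniformOscillation_lt {f : ℕ → ℝ → ℝ} {ε : ℝ}
    (hf : ∀ n, ∀ t ∈ s, |f n t| ≤ M)
    (hlim : limsup (fun n => uniformOscillation s (f n) σ) atTop < ε) :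
    ∀ᶠ n in atTop, ∀ t ∈ s, ∀ u ∈ s, |t - u| < σ → |f n t - f n u| < ε := by
  have hbdd : IsBoundedUnder (· ≤ ·) atTop fun n => uniformOscillation s (f n) σ :=
    isBoundedUnder_of ⟨2 * |M|, fun n => uniformOscillation_le (hf n)⟩
  filter_upwards [eventually_lt_of_limsup_lt hlim hbdd] with n hn t ht u hu htu
  exact (abs_sub_le_uniformOscillation (hf n) ht hu htu).trans_lt hn

theorem uniformEquicontinuous_restrict_of_limsup_uniformOscillation {f : ℕ → ℝ → ℝ}
    (hs : IsCompact s) (hcont : ∀ n, ContinuousOn (f n) s) (hf : ∀ n, ∀ t ∈ s, |f n t| ≤ M)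
    (hosc : ∀ ε > 0, ∃ σ > 0, limsup (fun n => uniformOscillation s (f n) σ) atTop < ε) :
    UniformEquicontinuous fun n => s.domRestrict (f n) := by
  have : CompactSpace s := isCompact_iff_compactSpace.mp hs
  refine .of_eventually
    (fun n => CompactSpace.uniformContinuous_of_continuous (hcont n).domRestrict) fun U hU => ?_
  obtain ⟨ε, hε, hεU⟩ := Metric.mem_uniformity_dist.1 hU
  obtain ⟨σ, hσ, hlim⟩ := hosc ε hε
  obtain ⟨N, hN⟩ :=
    (eventually_abs_sub_lt_of_limsup_uniformOscillation_lt hf hlim).exists_forall_of_atTop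
  refine ⟨N, ?_⟩
  filter_upwards [Metric.dist_mem_uniformity hσ] with xy hxy n hn
  exact hεU (hN n hn _ xy.1.2 _ xy.2.2 hxy)

end uniformOscillation

theorem arzela_ascoli_asymptotic_general (T : ℝ) (f : ℕ → ℝ → ℝ)
    (hcont : ∀ n, ContinuousOn (f n) (Icc 0 T))
    (hbdd : ∃ M : ℝ, ∀ n, ∀ t ∈ Icc (0:ℝ) T, |f n t| ≤ M)
    (ω : ℝ → ℝ)
    (hωlim : Tendsto ω (nhdsWithin 0 (Ioi 0)) (nhds 0))
    (hequi : ∀ σ : ℝ, 0 < σ →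
      Filter.limsup (fun n =>
          sSup {d : ℝ | ∃ t ∈ Icc (0:ℝ) T, ∃ s ∈ Icc (0:ℝ) T,
            |t - s| < σ ∧ d = |f n t - f n s|}) atTop ≤ ω σ) :
    ∃ φ : ℕ → ℕ, StrictMono φ ∧ ∃ g : ℝ → ℝ,
      TendstoUniformlyOn (fun k => f (φ k)) g atTop (Icc 0 T) := by
  obtain ⟨M, hM⟩ := hbdd
  have : CompactSpace (Icc 0 T) := isCompact_iff_compactSpace.mp isCompact_Icc
  have hosc : ∀ ε > 0, ∃ σ > 0,
      limsup (fun n => uniformOscillation (Icc 0 T) (f n) σ) atTop < ε := fun ε hε =>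
    let ⟨σ, hωσ, hσ⟩ := ((hωlim.eventually (gt_mem_nhds hε)).and self_mem_nhdsWithin).exists
    ⟨σ, hσ, (hequi σ hσ).trans_lt hωσ⟩
  obtain ⟨φ, hφ, g, hg⟩ := exists_strictMono_tendstoUniformly_of_equicontinuous
    (isCompact_Icc (a := -M) (b := M)) (fun n => (hcont n).domRestrict)
    (fun n t => abs_le.1 (hM n t t.2))
    (uniformEquicontinuous_restrict_of_limsup_uniformOscillation isCompact_Icc hcont hM
      hosc).equicontinuous
  refine ⟨φ, hφ, Function.extend Subtype.val g 0, ?_⟩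
  rw [tendstoUniformlyOn_iff_tendstoUniformly_comp_coe, Function.extend_comp Subtype.val_injective]
  exact hg

/-- Arzelà–Ascoli for asymptotically uniformly equicontinuous sequences: if a sequence
of continuous functions on `[0,T]` is uniformly bounded and there is a non-decreasing
modulus `ω : [0,∞) → [0,∞)` with `ω(σ) → 0` as `σ ↓ 0` such that for every `σ > 0`,
`limsup_{n→∞} sup_{|t−s|<σ} |f_n(t) − f_n(s)| ≤ ω(σ)`, then some subsequence converges
uniformly on `[0,T]`. -/
theorem arzela_ascoli_asymptotic (T : ℝ) (hT : 0 < T) (f : ℕ → ℝ → ℝ)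
    (hcont : ∀ n, ContinuousOn (f n) (Icc 0 T))
    (hbdd : ∃ M : ℝ, ∀ n, ∀ t ∈ Icc (0:ℝ) T, |f n t| ≤ M)
    (ω : ℝ → ℝ) (hω0 : ∀ σ, 0 ≤ σ → 0 ≤ ω σ) (hωmono : MonotoneOn ω (Ici 0))
    (hωlim : Tendsto ω (nhdsWithin 0 (Ioi 0)) (nhds 0))
    (hequi : ∀ σ : ℝ, 0 < σ →
      Filter.limsup (fun n =>
          sSup {d : ℝ | ∃ t ∈ Icc (0:ℝ) T, ∃ s ∈ Icc (0:ℝ) T,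
            |t - s| < σ ∧ d = |f n t - f n s|}) atTop ≤ ω σ) :
    ∃ φ : ℕ → ℕ, StrictMono φ ∧ ∃ g : ℝ → ℝ,
      TendstoUniformlyOn (fun k => f (φ k)) g atTop (Icc 0 T) :=
  arzela_ascoli_asymptotic_general T f hcont hbdd ω hωlim hequi
end

section
/- Let V be a nonempty finite set, let κ : V × V → [0,∞) with κ(x,x) = 0 for all x, and let E : V → [0,∞). Define the matrix M ∈ ℝ^{V×V} by M_{xy} := κ(y,x) for x ≠ y and M_{xx} := −Σ_{y'∈V} κ(x,y') − E_x. Assume that for every x ∈ V there exist k ≥ 0 and x = x₀, x₁, …, x_k ∈ V with κ(x_i, x_{i+1}) > 0 for all 0 ≤ i < k and E_{x_k} > 0. Then M is invertible. -/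
open Matrix BigOperators

/-!
Maximum principle: if `w ᵥ* M = 0`, then at a state `x` where `|w|` is maximal the
equation `Σ_y κ(x,y) (w y - w x) = E x * w x` forces `E x * |w x| = 0` and `|w| = |w x|` at
every state reachable from `x` by one positive-rate jump. Following the path from `x` to a
state with positive killing rate shows that the maximum of `|w|` is `0`.
-/

theorem of_chain_of_forall_rel_imp {α : Type*} {r : α → α → Prop} {P : α → Prop}
    (hP : ∀ a b, r a b → P a → P b) {c : ℕ → α} (h0 : P (c 0)) :
    ∀ {k : ℕ}, (∀ i < k, r (c i) (c (i + 1))) → P (c k)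
  | 0, _ => h0
  | k + 1, hc =>
    hP _ _ (hc k k.lt_succ_self)
      (of_chain_of_forall_rel_imp hP h0 fun i hi => hc i (hi.trans k.lt_succ_self))

section KilledGenerator

variable {V : Type*} [Fintype V] {κ : V × V → ℝ} {E : V → ℝ}

theorem vecMul_subgenerator_apply [DecidableEq V] {M : Matrix V V ℝ}
    (hκdiag : ∀ x, κ (x, x) = 0)
    (hM : ∀ x y, M x y = if x = y then -(∑ y', κ (x, y')) - E x else κ (y, x))
    (w : V → ℝ) (x : V) :
    (w ᵥ* M) x = ∑ y, κ (x, y) * (w y - w x) - E x * w x := by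
  have hentry : ∀ y, w y * M y x =
      κ (x, y) * w y - if y = x then (∑ y', κ (x, y') + E x) * w x else 0 := fun y => by
    rw [hM]
    split_ifs with hyx
    · subst hyx; rw [hκdiag]; ring
    · ring
  simp only [vecMul, dotProduct, hentry, Finset.sum_sub_distrib, Finset.sum_ite_eq',
    Finset.mem_univ, if_true, mul_sub, ← Finset.sum_mul]
  ring

theorem killed_harmonic_abs_max {w : V → ℝ} (hκ : ∀ p, 0 ≤ κ p) (hE : ∀ x, 0 ≤ E x)
    (hw : ∀ x, ∑ y, κ (x, y) * (w y - w x) = E x * w x) {x : V}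
    (hx : ∀ y, |w y| ≤ |w x|) :
    E x * |w x| = 0 ∧ ∀ y, 0 < κ (x, y) → |w y| = |w x| := by
  have hterm : ∀ y, 0 ≤ κ (x, y) * (|w x| - |w y|) := fun y =>
    mul_nonneg (hκ _) (sub_nonneg.2 (hx y))
  have hbound : E x * |w x| + ∑ y, κ (x, y) * (|w x| - |w y|) ≤ 0 := by
    have hsum : E x * w x + (∑ y, κ (x, y)) * w x = ∑ y, κ (x, y) * w y := by
      simp only [← hw x, mul_sub, Finset.sum_sub_distrib, Finset.sum_mul]; ring
    have habs : (E x + ∑ y, κ (x, y)) * |w x| ≤ ∑ y, κ (x, y) * |w y| :=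
      calc (E x + ∑ y, κ (x, y)) * |w x|
          = |∑ y, κ (x, y) * w y| := by
            rw [← hsum, ← add_mul, abs_mul,
              abs_of_nonneg (add_nonneg (hE x) (Finset.sum_nonneg fun y _ => hκ _))]
        _ ≤ ∑ y, κ (x, y) * |w y| := by
            refine (Finset.abs_sum_le_sum_abs _ _).trans_eq ?_
            simp only [abs_mul, abs_of_nonneg (hκ _)]
    simp only [mul_sub, Finset.sum_sub_distrib, ← Finset.sum_mul]
    linarith
  have hsum_nonneg := Finset.sum_nonneg fun y (_ : y ∈ Finset.univ) => hterm y
  have hkill_nonneg := mul_nonneg (hE x) (abs_nonneg (w x))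
  refine ⟨by linarith, fun y hy => ?_⟩
  have hy0 := (Finset.sum_eq_zero_iff_of_nonneg fun y _ => hterm y).1 (by linarith) y
    (Finset.mem_univ y)
  linarith [(mul_eq_zero.1 hy0).resolve_left hy.ne']

end KilledGenerator

theorem subgenerator_invertible_general {V : Type*} [Fintype V] [DecidableEq V]
    (κ : V × V → ℝ) (hκ : ∀ p, 0 ≤ κ p) (hκdiag : ∀ x, κ (x, x) = 0)
    (E : V → ℝ) (hE : ∀ x, 0 ≤ E x)
    (M : Matrix V V ℝ)
    (hM : ∀ x y, M x y = if x = y then -(∑ y', κ (x, y')) - E x else κ (y, x))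
    (hreach : ∀ x : V, ∃ (k : ℕ) (c : ℕ → V), c 0 = x ∧
      (∀ i < k, 0 < κ (c i, c (i + 1))) ∧ 0 < E (c k)) :
    IsUnit M := by
  rw [isUnit_iff_isUnit_det, isUnit_iff_ne_zero]
  intro hdet
  obtain ⟨w, hw_ne, hw⟩ := exists_vecMul_eq_zero_iff.2 hdet
  have harmonic : ∀ x, ∑ y, κ (x, y) * (w y - w x) = E x * w x := fun x =>
    sub_eq_zero.1 ((vecMul_subgenerator_apply hκdiag hM w x).symm.trans (congrFun hw x))
  obtain ⟨z, hz⟩ : ∃ z, w z ≠ 0 := Function.ne_iff.1 hw_ne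
  obtain ⟨x, -, hx⟩ := Finset.univ.exists_max_image (fun y => |w y|) ⟨z, Finset.mem_univ z⟩
  obtain ⟨k, c, rfl, hpath, hkill⟩ := hreach x
  have hmax : ∀ y, |w y| ≤ |w (c k)| :=
    of_chain_of_forall_rel_imp (r := fun a b => 0 < κ (a, b)) (P := fun a => ∀ y, |w y| ≤ |w a|)
      (fun a b hab ha => (killed_harmonic_abs_max hκ hE harmonic ha).2 b hab ▸ ha)
      (fun y => hx y (Finset.mem_univ y)) hpath
  have hzero : |w (c k)| = 0 :=
    (mul_eq_zero.1 (killed_harmonic_abs_max hκ hE harmonic hmax).1).resolve_left hkill.ne'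
  exact hz (abs_nonpos_iff.1 (hzero ▸ hmax z))

/-- Invertibility of the (transposed) sub-generator of a Markov jump process with
killing: if `M x y = κ(y,x)` for `x ≠ y` and `M x x = −Σ_{y'} κ(x,y') − E x`, and from
every state a state with positive killing rate `E` is reachable through jumps of
positive rate, then `M` is invertible. -/
theorem subgenerator_invertible {V : Type*} [Fintype V] [DecidableEq V] [Nonempty V]
    (κ : V × V → ℝ) (hκ : ∀ p, 0 ≤ κ p) (hκdiag : ∀ x, κ (x, x) = 0)
    (E : V → ℝ) (hE : ∀ x, 0 ≤ E x)
    (M : Matrix V V ℝ)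
    (hM : ∀ x y, M x y = if x = y then -(∑ y', κ (x, y')) - E x else κ (y, x))
    (hreach : ∀ x : V, ∃ (k : ℕ) (c : ℕ → V), c 0 = x ∧
      (∀ i < k, 0 < κ (c i, c (i + 1))) ∧ 0 < E (c k)) :
    IsUnit M :=
  subgenerator_invertible_general κ hκ hκdiag E hE M hM hreach
end

section
/- Under the fast–slow network hypotheses, every fast edge whose source lies in V₀ also has its target in V₀, and moreover the target node has at least one outgoing fast edge: for every r ∈ R_fast with r₋ ∈ V₀ one has r₊ ∈ V₀ and there exists r' ∈ R_fast with r'₋ = r₊. -/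
/-!
Fix a fast edge `r` with target `x`. Multiplying the stationarity equation at `x` by `ε` and
keeping only the inflow along `r` gives
`κ r · π^ε (src r) ≤ π^ε x · (ε · outflow rate of x)`.
As `ε → 0` the left side tends to `κ r · π (src r) > 0`, while `ε` times the outflow rate of `x`
tends to the total rate of the fast edges leaving `x`. Hence neither the limit of `π^ε x`
(which is `0` when `x ∈ V₁`) nor that total fast rate can vanish.
-/

open Filter BigOperators Topology

lemma tendsto_zero_of_tendsto_div_self {f : ℝ → ℝ} {c : ℝ}
    (h : Tendsto (fun ε => f ε / ε) (𝓝[>] 0) (𝓝 c)) : Tendsto f (𝓝[>] 0) (𝓝 0) := by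
  have hε : Tendsto (fun ε : ℝ => ε) (𝓝[>] 0) (𝓝 0) := tendsto_nhdsWithin_of_tendsto_nhds tendsto_id
  have := h.mul hε
  rw [mul_zero] at this
  refine this.congr' ?_
  filter_upwards [self_mem_nhdsWithin] with ε (hε : 0 < ε)
  exact div_mul_cancel₀ _ hε.ne'

section FastSlowNetwork

variable {V R : Type*} [Fintype R] [DecidableEq V] [DecidableEq R]
  (src tgt : R → V) (Rslow : Finset R) (κ : R → ℝ)

noncomputable def scaledRate (ε : ℝ) (r : R) : ℝ := if r ∈ Rslow then κ r else κ r / ε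

def fastExitRate (x : V) : ℝ :=
  ∑ r ∈ Finset.univ.filter (fun r => src r = x), if r ∈ Rslow then 0 else κ r

lemma tendsto_mul_outflow (x : V) :
    Tendsto (fun ε => ε * ∑ r ∈ Finset.univ.filter (fun r => src r = x), scaledRate Rslow κ ε r)
      (𝓝[>] 0) (𝓝 (fastExitRate src Rslow κ x)) := by
  simp only [Finset.mul_sum, fastExitRate]
  refine tendsto_finsetSum _ fun r _ => ?_
  unfold scaledRate
  split_ifs
  · have hε : Tendsto (fun ε : ℝ => ε) (𝓝[>] 0) (𝓝 0) :=
      tendsto_nhdsWithin_of_tendsto_nhds tendsto_id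
    simpa using hε.mul_const (κ r)
  · refine tendsto_const_nhds.congr' ?_
    filter_upwards [self_mem_nhdsWithin] with ε (hε : 0 < ε)
    field_simp

lemma exists_fast_edge_of_fastExitRate_ne_zero {x : V} (h : fastExitRate src Rslow κ x ≠ 0) :
    ∃ r, r ∉ Rslow ∧ src r = x := by
  obtain ⟨r, hr, hne⟩ := Finset.exists_ne_zero_of_sum_ne_zero h
  exact ⟨r, fun hs => hne (if_pos hs), (Finset.mem_filter.mp hr).2⟩

variable {src tgt Rslow κ}

lemma rate_mul_le_mul_inflow (hκ : ∀ r, 0 ≤ κ r) {π : V → ℝ} (hπ : ∀ x, 0 ≤ π x)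
    {ε : ℝ} (hε : 0 < ε) {r : R} (hr : r ∉ Rslow) :
    κ r * π (src r) ≤
      ε * ∑ r' ∈ Finset.univ.filter (fun r' => tgt r' = tgt r),
        scaledRate Rslow κ ε r' * π (src r') := by
  have hrate : ∀ r', 0 ≤ scaledRate Rslow κ ε r' := fun r' => by
    unfold scaledRate; split_ifs
    exacts [hκ r', div_nonneg (hκ r') hε.le]
  calc κ r * π (src r) = ε * (scaledRate Rslow κ ε r * π (src r)) := by
        rw [scaledRate, if_neg hr]; field_simp
    _ ≤ _ := by
        gcongr
        exact Finset.single_le_sum (f := fun r' => scaledRate Rslow κ ε r' * π (src r'))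
          (fun r' _ => mul_nonneg (hrate r') (hπ _)) (by simp)

lemma rate_mul_lim_le_lim_mul_fastExitRate (hκ : ∀ r, 0 ≤ κ r) {πeps : ℝ → V → ℝ}
    (hπ : ∀ ε, 0 < ε → ∀ x, 0 ≤ πeps ε x)
    {r : R} (hr : r ∉ Rslow)
    (hstat : ∀ ε, 0 < ε →
      πeps ε (tgt r) * ∑ r' ∈ Finset.univ.filter (fun r' => src r' = tgt r),
          scaledRate Rslow κ ε r'
        = ∑ r' ∈ Finset.univ.filter (fun r' => tgt r' = tgt r),
            scaledRate Rslow κ ε r' * πeps ε (src r'))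
    {a L : ℝ} (ha : Tendsto (fun ε => πeps ε (src r)) (𝓝[>] 0) (𝓝 a))
    (hL : Tendsto (fun ε => πeps ε (tgt r)) (𝓝[>] 0) (𝓝 L)) :
    κ r * a ≤ L * fastExitRate src Rslow κ (tgt r) := by
  refine le_of_tendsto_of_tendsto (ha.const_mul (κ r))
    (hL.mul (tendsto_mul_outflow src Rslow κ (tgt r))) ?_
  filter_upwards [self_mem_nhdsWithin] with ε (hε : 0 < ε)
  calc κ r * πeps ε (src r) ≤ ε * (πeps ε (tgt r) * _) :=
        (hstat ε hε).symm ▸ rate_mul_le_mul_inflow hκ (hπ ε hε) hε hr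
    _ = _ := by ring

end FastSlowNetwork

theorem fast_edge_from_V0_lands_in_V0_general
    {V R : Type*} [Fintype V] [Fintype R] [DecidableEq V] [DecidableEq R]
    (src tgt : R → V)
    (Rslow Rfast : Finset R)
    (hRdisj : Disjoint Rslow Rfast) (hRunion : Rslow ∪ Rfast = Finset.univ)
    (κ : R → ℝ) (hκ : ∀ r, 0 < κ r)
    (πeps : ℝ → V → ℝ)
    (hπpos : ∀ ε : ℝ, 0 < ε → ∀ x, 0 < πeps ε x)
    (hstat : ∀ ε : ℝ, 0 < ε → ∀ x : V,
      πeps ε x * (∑ r ∈ Finset.univ.filter (fun r => src r = x),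
          (if r ∈ Rslow then κ r else κ r / ε))
        = ∑ r ∈ Finset.univ.filter (fun r => tgt r = x),
            (if r ∈ Rslow then κ r else κ r / ε) * πeps ε (src r))
    (V0 V1 : Finset V)
    (hVunion : V0 ∪ V1 = Finset.univ)
    (πlim πtilde : V → ℝ)
    (hV0 : ∀ x ∈ V0, 0 < πlim x ∧
      Tendsto (fun ε => πeps ε x) (nhdsWithin 0 (Set.Ioi 0)) (nhds (πlim x)))
    (hV1 : ∀ x ∈ V1, 0 < πtilde x ∧
      Tendsto (fun ε => πeps ε x / ε) (nhdsWithin 0 (Set.Ioi 0)) (nhds (πtilde x))) :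
    ∀ r ∈ Rfast, src r ∈ V0 →
      tgt r ∈ V0 ∧ ∃ r' ∈ Rfast, src r' = tgt r := by
  intro r hr hsrc
  obtain ⟨hπsrc_pos, hπsrc_lim⟩ := hV0 _ hsrc
  have hflow_pos : 0 < κ r * πlim (src r) := mul_pos (hκ r) hπsrc_pos
  have hbound : ∀ L, Tendsto (fun ε => πeps ε (tgt r)) (𝓝[>] 0) (𝓝 L) →
      κ r * πlim (src r) ≤ L * fastExitRate src Rslow κ (tgt r) := fun _ hL =>
    rate_mul_lim_le_lim_mul_fastExitRate (fun r => (hκ r).le)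
      (fun ε hε x => (hπpos ε hε x).le) (Finset.disjoint_right.mp hRdisj hr)
      (fun ε hε => hstat ε hε (tgt r)) hπsrc_lim hL
  have htgt : tgt r ∈ V0 := by
    by_contra hV0tgt
    have hV1tgt := (Finset.mem_union.mp (hVunion ▸ Finset.mem_univ (tgt r))).resolve_left hV0tgt
    have := hbound 0 (tendsto_zero_of_tendsto_div_self (hV1 _ hV1tgt).2)
    rw [zero_mul] at this
    linarith
  refine ⟨htgt, ?_⟩
  have hfast : fastExitRate src Rslow κ (tgt r) ≠ 0 := fun h0 => by
    have := hbound _ (hV0 _ htgt).2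
    rw [h0, mul_zero] at this
    linarith
  obtain ⟨r', hr'slow, hr'src⟩ := exists_fast_edge_of_fastExitRate_ne_zero src Rslow κ hfast
  have hr'fast := (Finset.mem_union.mp (hRunion ▸ Finset.mem_univ r')).resolve_left hr'slow
  exact ⟨r', hr'fast, hr'src⟩

/-- Fast–slow network: every fast edge with source in `V₀` has its target in `V₀`, and
the target has at least one outgoing fast edge. Here `(V,R)` is a finite directed graph
with edge partition `R = R_slow ⊔ R_fast`, rates `κ > 0` scaled by `1/ε` on fast edges,
and `π^ε` is the normalised stationary distribution, with `π^ε_x → π_x > 0` on `V₀` and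
`π^ε_x/ε → π̃_x > 0` on `V₁`. -/
theorem fast_edge_from_V0_lands_in_V0
    {V R : Type*} [Fintype V] [Fintype R] [DecidableEq V] [DecidableEq R]
    (src tgt : R → V)
    (Rslow Rfast : Finset R)
    (hRdisj : Disjoint Rslow Rfast) (hRunion : Rslow ∪ Rfast = Finset.univ)
    (κ : R → ℝ) (hκ : ∀ r, 0 < κ r)
    (πeps : ℝ → V → ℝ)
    (hπpos : ∀ ε : ℝ, 0 < ε → ∀ x, 0 < πeps ε x)
    (hnorm : ∀ ε : ℝ, 0 < ε → ∑ x, πeps ε x = 1)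
    (hstat : ∀ ε : ℝ, 0 < ε → ∀ x : V,
      πeps ε x * (∑ r ∈ Finset.univ.filter (fun r => src r = x),
          (if r ∈ Rslow then κ r else κ r / ε))
        = ∑ r ∈ Finset.univ.filter (fun r => tgt r = x),
            (if r ∈ Rslow then κ r else κ r / ε) * πeps ε (src r))
    (V0 V1 : Finset V)
    (hVdisj : Disjoint V0 V1) (hVunion : V0 ∪ V1 = Finset.univ)
    (πlim πtilde : V → ℝ)
    (hV0 : ∀ x ∈ V0, 0 < πlim x ∧
      Tendsto (fun ε => πeps ε x) (nhdsWithin 0 (Set.Ioi 0)) (nhds (πlim x)))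
    (hV1 : ∀ x ∈ V1, 0 < πtilde x ∧
      Tendsto (fun ε => πeps ε x / ε) (nhdsWithin 0 (Set.Ioi 0)) (nhds (πtilde x))) :
    ∀ r ∈ Rfast, src r ∈ V0 →
      tgt r ∈ V0 ∧ ∃ r' ∈ Rfast, src r' = tgt r :=
  fast_edge_from_V0_lands_in_V0_general src tgt Rslow Rfast hRdisj hRunion κ hκ πeps hπpos hstat V0
    V1 hVunion πlim πtilde hV0 hV1
end
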